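/- arXiv:2402.09515 — 11 statements merged into one kernel-verified Lean document; each statement's English description precedes it below -/
import Mathlib

section
/- Let k be a positive integer that is not a power of 2 and let n be a positive integer. There exists a function x : Fin n → ℕ with every x i in S(k), with ∑ i, (1:ℚ)/(x i) = 1, and with k dividing x i for some i, if and only if (k,n) = (3,3), or k ≡ 0 (mod 4) and 4n ≥ k + 8, or k ≡ 1 (mod 4) and 4n ≥ k + 11, or k ≡ 2 (mod 4) and 4n ≥ k + 10, or k ≡ 3 (mod 4) and 4n ≥ k + 13. -/
/-!
Split a solution into the terms divisible by `k` and the others. The others are `2`s and `4`s (a `1`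
would leave no room for a multiple of `k`), so the multiples of `k` contribute `m / 4` with
`1 ≤ m ≤ 4`. For `N` of them, `k / xᵢ ≤ 1` gives `m k ≤ 4 N`; and as each `k / xᵢ` is `1` or at most
`1 / 2`, also `4 N ≠ m k + 1`, which is what rules out `4 n = k + 9`.

Conversely `1 = 1 / 2 + 1 / 4 + 1 / 4`, and `1 / 4 = k / (4 k)` is a sum of `M` fractions
`1 / (2 ^ a k)` with `a ≤ 2` as soon as `M ≤ k ≤ 4 M` and `4 M ≠ k + 1`. Splitting `k = (k - 1) + 1`
and writing the last `1 / (4 k)` as `k⁻¹` times a shorter representation of `1 / 4` removes the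
condition `M ≤ k`.
-/

open Finset

section Necessity

variable {ι : Type*}

lemma sum_eq_card_or_sum_add_half_le_card (s : Finset ι) (f : ι → ℚ)
    (hf : ∀ i ∈ s, f i = 1 ∨ f i ≤ 1 / 2) :
    ∑ i ∈ s, f i = #s ∨ ∑ i ∈ s, f i + 1 / 2 ≤ #s := by
  by_cases hone : ∀ i ∈ s, f i = 1
  · left
    simp [sum_congr rfl hone]
  · right
    classical
    push Not at hone
    obtain ⟨j, hj, hfj⟩ := hone
    have hrest : ∑ i ∈ s.erase j, f i ≤ #(s.erase j) := by
      simpa using sum_le_card_nsmul (s.erase j) f 1 fun i hi =>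
        (hf i (mem_of_mem_erase hi)).elim le_of_eq (fun h => h.trans (by norm_num))
    have hcard : (#(s.erase j) : ℚ) + 1 = #s := by exact_mod_cast card_erase_add_one hj
    rw [← add_sum_erase s f hj]
    linarith [(hf j hj).resolve_left hfj]

-- A positive multiple of `k` other than `k` is at least `2 k`.
lemma natCast_mul_sum_one_div_eq_card_or (k : ℕ) (s : Finset ι) (x : ι → ℕ)
    (hx : ∀ i ∈ s, 0 < x i ∧ k ∣ x i) :
    (k : ℚ) * ∑ i ∈ s, 1 / (x i : ℚ) = #s ∨ (k : ℚ) * ∑ i ∈ s, 1 / (x i : ℚ) + 1 / 2 ≤ #s := by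
  rw [mul_sum]
  refine sum_eq_card_or_sum_add_half_le_card s _ fun i hi => ?_
  obtain ⟨hpos, j, hj⟩ := hx i hi
  have hk : (k : ℚ) ≠ 0 := by rintro h; simp_all [Nat.cast_eq_zero.mp h]
  have hkj : (k : ℚ) * (1 / x i) = 1 / j := by rw [hj]; push_cast; field_simp
  rw [hkj]
  rcases Nat.lt_or_ge j 2 with h | h
  · obtain rfl : j = 1 := by rcases j with _ | _ | _ <;> simp_all
    simp
  · right
    exact one_div_le_one_div_of_le (by norm_num) (by exact_mod_cast h)

-- `m / 4` is the contribution of the multiples of `k`; the other terms are `2`s and `4`s.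
lemma exists_counts_of_sum_one_div_eq_one (k : ℕ) (s : Finset ι) (x : ι → ℕ)
    (hpos : ∀ i ∈ s, 0 < x i) (hdvd : ∀ i ∈ s, ¬ k ∣ x i → x i ∣ 4)
    (hsum : ∑ i ∈ s, (1 : ℚ) / x i = 1) (hnt : ∃ i ∈ s, k ∣ x i) :
    ∃ m, 0 < m ∧ m ≤ 4 ∧ 4 ≤ m + 2 * #{i ∈ s | ¬ k ∣ x i} ∧
      (m * k = 4 * #{i ∈ s | k ∣ x i} ∨ m * k + 2 ≤ 4 * #{i ∈ s | k ∣ x i}) := by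
  set D := {i ∈ s | k ∣ x i}
  set D' := {i ∈ s | ¬ k ∣ x i}
  set W := ∑ i ∈ D', 4 / x i
  have hD' : ∑ i ∈ D', (1 : ℚ) / x i = W / 4 := by
    simp only [W, Nat.cast_sum, sum_div]
    refine sum_congr rfl fun i hi => ?_
    obtain ⟨hi, hndvd⟩ := mem_filter.mp hi
    rw [Nat.cast_div (hdvd i hi hndvd) (by exact_mod_cast (hpos i hi).ne')]
    push_cast
    field_simp
  have hDpos : 0 < ∑ i ∈ D, (1 : ℚ) / x i := by
    obtain ⟨i₀, hi₀, hdvd₀⟩ := hnt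
    refine sum_pos' (fun i _ => by positivity) ⟨i₀, mem_filter.mpr ⟨hi₀, hdvd₀⟩, ?_⟩
    have := hpos i₀ hi₀
    positivity
  have hsplit : ∑ i ∈ D, (1 : ℚ) / x i + W / 4 = 1 := by
    rw [← hD', sum_filter_add_sum_filter_not, hsum]
  have hW : W < 4 := by exact_mod_cast (by linarith : (W : ℚ) < 4)
  have hWD' : W ≤ 2 * #D' := by
    simpa [mul_comm] using sum_le_card_nsmul D' (fun i => 4 / x i) 2 fun i hi => by
      obtain ⟨hi, hndvd⟩ := mem_filter.mp hi
      have hle : 4 / x i < 4 := (single_le_sum (f := fun i => 4 / x i)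
        (fun _ _ => Nat.zero_le _) (mem_filter.mpr ⟨hi, hndvd⟩)).trans_lt hW
      have hx4 := Nat.le_of_dvd (by norm_num) (hdvd i hi hndvd)
      interval_cases x i <;> simp_all
  refine ⟨4 - W, by omega, by omega, by omega, ?_⟩
  have hD : ∑ i ∈ D, (1 : ℚ) / x i = ((4 - W : ℕ) : ℚ) / 4 := by
    rw [Nat.cast_sub hW.le]
    push_cast
    linarith
  rcases natCast_mul_sum_one_div_eq_card_or k D x
    (fun i hi => ⟨hpos i (mem_filter.mp hi).1, (mem_filter.mp hi).2⟩) with h | h <;>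
    rw [hD] at h
  · left
    exact_mod_cast (by linarith : ((4 - W : ℕ) : ℚ) * k = 4 * #D)
  · right
    exact_mod_cast (by linarith : ((4 - W : ℕ) : ℚ) * k + 2 ≤ 4 * #D)

end Necessity

section Sufficiency

def IsReciprocalSum (T : Set ℕ) (M : ℕ) (q : ℚ) : Prop :=
  ∃ L : List ℕ, L.length = M ∧ (∀ v ∈ L, v ∈ T) ∧ (L.map fun v : ℕ => (1 : ℚ) / v).sum = q

variable {T : Set ℕ}

namespace IsReciprocalSum

lemma replicate {v : ℕ} (hv : v ∈ T) (M : ℕ) : IsReciprocalSum T M (M / v) :=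
  ⟨List.replicate M v, List.length_replicate, fun _ hw => List.eq_of_mem_replicate hw ▸ hv,
    by simp [div_eq_mul_inv]⟩

lemma add {M₁ M₂ : ℕ} {q₁ q₂ : ℚ} (h₁ : IsReciprocalSum T M₁ q₁) (h₂ : IsReciprocalSum T M₂ q₂) :
    IsReciprocalSum T (M₁ + M₂) (q₁ + q₂) := by
  obtain ⟨L₁, hl₁, hm₁, hs₁⟩ := h₁
  obtain ⟨L₂, hl₂, hm₂, hs₂⟩ := h₂
  exact ⟨L₁ ++ L₂, by simp [hl₁, hl₂],
    fun v hv => (List.mem_append.mp hv).elim (hm₁ v) (hm₂ v),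
    by rw [List.map_append, List.sum_append, hs₁, hs₂]⟩

lemma div_natCast {k M : ℕ} {q : ℚ} (hT : ∀ v ∈ T, v * k ∈ T) (h : IsReciprocalSum T M q) :
    IsReciprocalSum T M (q / k) := by
  obtain ⟨L, hl, hm, hs⟩ := h
  refine ⟨L.map (· * k), by simp [hl], by simpa using fun v hv => hT v (hm v hv), ?_⟩
  have hvk (v : ℕ) : (1 : ℚ) / (v * k : ℕ) = 1 / v * (1 / k) := by
    rw [Nat.cast_mul, one_div_mul_one_div]
  rw [List.map_map, Function.comp_def]
  simp only [hvk]
  rw [List.sum_map_mul_right, hs, mul_one_div]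

lemma of_le {k M c : ℕ} (hk : k ∈ T) (h2k : 2 * k ∈ T) (h4k : 4 * k ∈ T)
    (h₁ : M ≤ c) (h₂ : c ≤ 4 * M) (h₃ : 4 * M ≠ c + 1) :
    IsReciprocalSum T M (c / (4 * k)) := by
  obtain ⟨c₀, c₁, c₂, hM, hc⟩ : ∃ c₀ c₁ c₂ : ℕ, c₀ + c₁ + c₂ = M ∧ 4 * c₀ + 2 * c₁ + c₂ = c := by
    rcases le_or_gt c (2 * M) with h | h
    · exact ⟨0, c - M, 2 * M - c, by omega, by omega⟩
    · exact ⟨c / 2 + c % 2 - M, 2 * M - 2 * (c % 2) - c / 2, c % 2, by omega, by omega⟩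
  have h := ((replicate hk c₀).add (replicate h2k c₁)).add (replicate h4k c₂)
  rw [hM] at h
  convert h using 1
  rcases eq_or_ne k 0 with rfl | hk0
  · simp
  rw [← hc]
  push_cast
  field_simp
  ring

end IsReciprocalSum

def kPowTerms (k : ℕ) : Set ℕ := {v | ∃ a b, a ≤ 2 ∧ 1 ≤ b ∧ v = 2 ^ a * k ^ b}

lemma isReciprocalSum_kPowTerms_quarter {k M : ℕ} (hk : 2 ≤ k) (h₁ : k ≤ 4 * M)
    (h₂ : 4 * M ≠ k + 1) : IsReciprocalSum (kPowTerms k) M (1 / 4) := by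
  have h1k : k ∈ kPowTerms k := ⟨0, 1, by norm_num, le_rfl, by ring⟩
  have h2k : 2 * k ∈ kPowTerms k := ⟨1, 1, by norm_num, le_rfl, by ring⟩
  have h4k : 4 * k ∈ kPowTerms k := ⟨2, 1, le_rfl, le_rfl, by ring⟩
  have hTk : ∀ v ∈ kPowTerms k, v * k ∈ kPowTerms k := by
    rintro _ ⟨a, b, ha, hb, rfl⟩
    exact ⟨a, b + 1, ha, by omega, by ring⟩
  induction M using Nat.strong_induction_on with
  | _ M ih =>
    rcases le_or_gt M k with hMk | hMk
    · have hk0 : (k : ℚ) ≠ 0 := by positivity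
      have h := IsReciprocalSum.of_le h1k h2k h4k hMk h₁ h₂
      rwa [div_mul_cancel_right₀ hk0, ← one_div] at h
    -- `1 / 4 = (k - 1) / (4 k) + (1 / 4) / k`, the last summand with `M - M₁ ≥ (k + 5) / 4` terms.
    set M₁ := min (k - 1) (M - (k + 5) / 4)
    have hsmall := IsReciprocalSum.of_le (c := k - 1) (M := M₁)
      h1k h2k h4k (by omega) (by omega) (by omega)
    have hlarge := (ih (M - M₁) (by omega) (by omega) (by omega)).div_natCast hTk
    have h := hsmall.add hlarge
    rw [Nat.add_sub_cancel' (by omega)] at h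
    convert h using 1
    rw [Nat.cast_sub (by omega)]
    field_simp
    ring

end Sufficiency

lemma exists_solution_of_list (k : ℕ) (L : List ℕ)
    (hS : ∀ v ∈ L, ∃ a b : ℕ, a ≤ 2 ∧ v = 2 ^ a * k ^ b)
    (hsum : (L.map fun v : ℕ => (1 : ℚ) / v).sum = 1) (hnt : ∃ v ∈ L, k ∣ v) :
    ∃ x : Fin L.length → ℕ, (∀ i, ∃ a b : ℕ, a ≤ 2 ∧ x i = 2 ^ a * k ^ b) ∧
      (∑ i, (1 : ℚ) / (x i)) = 1 ∧ (∃ i, k ∣ x i) := by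
  obtain ⟨v, hv, hkv⟩ := hnt
  obtain ⟨i, hi, rfl⟩ := List.mem_iff_getElem.mp hv
  refine ⟨fun j => L[j.1], fun j => hS _ (List.getElem_mem _), ?_, ⟨i, hi⟩, hkv⟩
  rw [Fin.sum_univ_fun_getElem L fun v : ℕ => (1 : ℚ) / v, hsum]

lemma exists_nontrivial_solution {k n : ℕ} (hk : 2 ≤ k) (h₁ : k + 8 ≤ 4 * n)
    (h₂ : 4 * n ≠ k + 9) :
    ∃ x : Fin n → ℕ, (∀ i, ∃ a b : ℕ, a ≤ 2 ∧ x i = 2 ^ a * k ^ b) ∧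
      (∑ i, (1 : ℚ) / (x i)) = 1 ∧ (∃ i, k ∣ x i) := by
  obtain ⟨L, hlen, hL, hsum⟩ :=
    isReciprocalSum_kPowTerms_quarter (M := n - 2) hk (by omega) (by omega)
  obtain ⟨v, hv⟩ := List.exists_mem_of_ne_nil L (by rintro rfl; simp at hlen; omega)
  obtain ⟨_, b, _, hb, rfl⟩ := hL v hv
  have hlen' : (2 :: 4 :: L).length = n := by simp [hlen]; omega
  subst hlen'
  refine exists_solution_of_list k (2 :: 4 :: L) ?_ ?_
    ⟨_, List.mem_cons_of_mem _ (List.mem_cons_of_mem _ hv),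
      Dvd.dvd.mul_left (dvd_pow_self k (by omega)) _⟩
  · simp only [List.mem_cons, forall_eq_or_imp]
    exact ⟨⟨1, 0, by norm_num⟩, ⟨2, 0, by norm_num⟩, fun w hw =>
      let ⟨a, b, ha, _, hw⟩ := hL w hw; ⟨a, b, ha, hw⟩⟩
  · simp only [List.map_cons, List.sum_cons, hsum]
    norm_num

lemma three_le_of_not_exists_eq_two_pow {k : ℕ} (hk : 0 < k) (hk2 : ¬ ∃ m : ℕ, k = 2 ^ m) :
    3 ≤ k := by
  by_contra hlt
  interval_cases k
  exacts [hk2 ⟨0, rfl⟩, hk2 ⟨1, rfl⟩]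

lemma two_pow_mul_pow_dvd_four {k a b : ℕ} (ha : a ≤ 2) (hk : ¬ k ∣ 2 ^ a * k ^ b) :
    2 ^ a * k ^ b ∣ 4 := by
  obtain rfl : b = 0 := by
    by_contra hb
    exact hk (Dvd.dvd.mul_left (dvd_pow_self k hb) _)
  simpa using Nat.pow_dvd_pow 2 ha

theorem nontrivial_solution_iff_general (k n : ℕ) (hk : 0 < k)
    (hk2 : ¬ ∃ m : ℕ, k = 2 ^ m) :
    (∃ x : Fin n → ℕ,
        (∀ i, ∃ a b : ℕ, a ≤ 2 ∧ x i = 2 ^ a * k ^ b) ∧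
        (∑ i, (1 : ℚ) / (x i)) = 1 ∧
        (∃ i, k ∣ x i)) ↔
      ((k = 3 ∧ n = 3) ∨
        (k % 4 = 0 ∧ 4 * n ≥ k + 8) ∨
        (k % 4 = 1 ∧ 4 * n ≥ k + 11) ∨
        (k % 4 = 2 ∧ 4 * n ≥ k + 10) ∨
        (k % 4 = 3 ∧ 4 * n ≥ k + 13)) := by
  have hk3 := three_le_of_not_exists_eq_two_pow hk hk2
  constructor
  · rintro ⟨x, hS, hsum, i₀, hi₀⟩
    choose a b ha hx using hS
    obtain ⟨m, hm₀, hm₄, hD', hD⟩ := exists_counts_of_sum_one_div_eq_one k univ x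
      (fun i _ => hx i ▸ by positivity) (fun i _ => hx i ▸ two_pow_mul_pow_dvd_four (ha i))
      hsum ⟨i₀, mem_univ _, hi₀⟩
    have hn := card_filter_add_card_filter_not (s := univ) (fun i => k ∣ x i)
    rw [card_univ, Fintype.card_fin] at hn
    interval_cases m <;> omega
  · rintro (⟨rfl, rfl⟩ | h)
    · exact exists_solution_of_list 3 [3, 3, 3] (fun v hv => ⟨0, 1, by norm_num, by simp_all⟩)
        (by norm_num) ⟨3, by simp, dvd_rfl⟩
    · exact exists_nontrivial_solution (by omega) (by omega) (by omega)

/-- Theorem 4.1: For a positive integer `k` that is not a power of 2, the equation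
`∑ 1/xᵢ = 1` has a nontrivial solution in integers of the form `2^a * k^b`
(`a ∈ {0,1,2}`, `b ≥ 0`) with `n` terms iff `(k,n) = (3,3)` or the stated
inequalities according to `k mod 4` hold. -/
theorem nontrivial_solution_iff (k n : ℕ) (hk : 0 < k)
    (hk2 : ¬ ∃ m : ℕ, k = 2 ^ m) (hn : 0 < n) :
    (∃ x : Fin n → ℕ,
        (∀ i, ∃ a b : ℕ, a ≤ 2 ∧ x i = 2 ^ a * k ^ b) ∧
        (∑ i, (1 : ℚ) / (x i)) = 1 ∧
        (∃ i, k ∣ x i)) ↔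
      ((k = 3 ∧ n = 3) ∨
        (k % 4 = 0 ∧ 4 * n ≥ k + 8) ∨
        (k % 4 = 1 ∧ 4 * n ≥ k + 11) ∨
        (k % 4 = 2 ∧ 4 * n ≥ k + 10) ∨
        (k % 4 = 3 ∧ 4 * n ≥ k + 13)) :=
  nontrivial_solution_iff_general k n hk hk2
end

section
/- Let k be a positive integer that is not a power of 2 and let n be a positive integer. If (k,n) = (3,3), or k ≡ 0 (mod 4) and 4n ≥ k + 8, or k ≡ 1 (mod 4) and 4n ≥ k + 11, or k ≡ 2 (mod 4) and 4n ≥ k + 10, or k ≡ 3 (mod 4) and 4n ≥ k + 13, then there exists a function x : Fin n → ℕ with every x i in S(k), with ∑ i, (1:ℚ)/(x i) = 1, and with k dividing x i for some i. -/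
/-!
Write `1 = 1/2 + 1/4 + 1/4`; it remains to write `1/4 = k/(4k)` as a sum of `n - 2` unit
fractions with denominators in `k • S(k)`. Sums of `m` terms from `{1/k, 1/(2k), 1/(4k)}` give
every `u/(4k)` with `m ≤ u ≤ 4m`, `u ≠ 4m - 1`. So if `n - 2 ≤ k` we are done at once; otherwise
spend about `k/4` terms on `(k-1)/(4k)` and write the remaining `1/(4k)` as the same problem
with fewer terms, scaled by `k`.
-/

/-- The set `S(k)`. -/
def denominatorSet (k : ℕ) : Set ℕ := {x | ∃ a b : ℕ, a ≤ 2 ∧ x = 2 ^ a * k ^ b}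

lemma one_two_four_subset_denominatorSet (k : ℕ) : ({1, 2, 4} : Set ℕ) ⊆ denominatorSet k := by
  rintro x (rfl | rfl | rfl)
  exacts [⟨0, 0, by norm_num⟩, ⟨1, 0, by norm_num⟩, ⟨2, 0, by norm_num⟩]

lemma mul_self_mem_denominatorSet {k x : ℕ} (hx : x ∈ denominatorSet k) :
    x * k ∈ {y ∈ denominatorSet k | k ∣ y} := by
  obtain ⟨a, b, ha, rfl⟩ := hx
  exact ⟨⟨a, b + 1, ha, by ring⟩, dvd_mul_left k _⟩

def IsSumOfUnitFractions (T : Set ℕ) (m : ℕ) (q : ℚ) : Prop :=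
  ∃ l : List ℕ, l.length = m ∧ (∀ x ∈ l, x ∈ T) ∧ (l.map fun x : ℕ => (1 : ℚ) / x).sum = q

namespace IsSumOfUnitFractions

variable {T T' : Set ℕ} {m m' : ℕ} {q q' : ℚ}

lemma replicate {x : ℕ} (hx : x ∈ T) (m : ℕ) : IsSumOfUnitFractions T m (m / x) :=
  ⟨List.replicate m x, List.length_replicate, fun _ hy => List.eq_of_mem_replicate hy ▸ hx,
    by simp [div_eq_mul_inv]⟩

lemma add (h : IsSumOfUnitFractions T m q) (h' : IsSumOfUnitFractions T m' q') :
    IsSumOfUnitFractions T (m + m') (q + q') := by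
  obtain ⟨l, rfl, hl, rfl⟩ := h
  obtain ⟨l', rfl, hl', rfl⟩ := h'
  exact ⟨l ++ l', List.length_append,
    fun x hx => (List.mem_append.1 hx).elim (hl x) (hl' x), by simp⟩

lemma map_mul (h : IsSumOfUnitFractions T m q) {c : ℕ} (hc : ∀ x ∈ T, x * c ∈ T') :
    IsSumOfUnitFractions T' m (q / c) := by
  obtain ⟨l, rfl, hl, rfl⟩ := h
  refine ⟨l.map (· * c), List.length_map _, by simpa using fun x hx => hc x (hl x hx), ?_⟩
  simp [Function.comp_def, div_eq_mul_inv, List.sum_map_mul_left, mul_comm]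

end IsSumOfUnitFractions

open IsSumOfUnitFractions

lemma isSumOfUnitFractions_one_two_four {m u : ℕ} (hmu : m ≤ u) (hu : u ≤ 4 * m)
    (hu' : u + 1 ≠ 4 * m) : IsSumOfUnitFractions {1, 2, 4} m (u / 4) := by
  obtain ⟨A, B, C, rfl, rfl⟩ : ∃ A B C : ℕ, A + B + C = m ∧ 4 * A + 2 * B + C = u :=
    ⟨(u - m) / 3, (u - m) % 3, m - (u - m) / 3 - (u - m) % 3, by omega, by omega⟩
  convert ((replicate (T := {1, 2, 4}) (x := 1) (by simp) A).add
    (replicate (x := 2) (by simp) B)).add (replicate (x := 4) (by simp) C) using 1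
  push_cast
  ring

lemma isSumOfUnitFractions_quarter {k : ℕ} (hk : 3 ≤ k) {m : ℕ} (hkm : k ≤ 4 * m)
    (hkm' : k + 1 ≠ 4 * m) : IsSumOfUnitFractions {x ∈ denominatorSet k | k ∣ x} m (1 / 4) := by
  induction m using Nat.strong_induction_on with
  | _ m ih =>
  have hscale : ∀ x ∈ ({1, 2, 4} : Set ℕ), x * k ∈ {y ∈ denominatorSet k | k ∣ y} :=
    fun x hx => mul_self_mem_denominatorSet (one_two_four_subset_denominatorSet k hx)
  have hk0 : (k : ℚ) ≠ 0 := by positivity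
  by_cases hmk : m ≤ k
  · convert (isSumOfUnitFractions_one_two_four hmk hkm hkm').map_mul hscale using 1
    field_simp
  · set m₁ := (k + 6) / 4
    have h₁ := (isSumOfUnitFractions_one_two_four (m := m₁) (u := k - 1) (by omega) (by omega)
      (by omega)).map_mul hscale
    have h₂ := (ih (m - m₁) (by omega) (by omega) (by omega)).map_mul
      fun x hx => mul_self_mem_denominatorSet hx.1
    convert h₁.add h₂ using 1
    · omega
    · push_cast [Nat.cast_sub (by omega : 1 ≤ k)]
      field_simp
      ring

lemma exists_nontrivial_solution_of_list {k : ℕ} (l : List ℕ)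
    (hl : ∀ x ∈ l, x ∈ denominatorSet k) (hsum : (l.map fun x : ℕ => (1 : ℚ) / x).sum = 1)
    (hdvd : ∃ x ∈ l, k ∣ x) :
    ∃ x : Fin l.length → ℕ,
      (∀ i, ∃ a b : ℕ, a ≤ 2 ∧ x i = 2 ^ a * k ^ b) ∧
      (∑ i, (1 : ℚ) / (x i)) = 1 ∧
      (∃ i, k ∣ x i) := by
  obtain ⟨y, hy, hky⟩ := hdvd
  obtain ⟨i, hi, rfl⟩ := List.mem_iff_getElem.1 hy
  exact ⟨fun i => l[i.1], fun i => hl _ (List.getElem_mem _),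
    (Fin.sum_univ_fun_getElem l _).trans hsum, ⟨i, hi⟩, hky⟩

theorem nontrivial_solution_of_bound_general (k n : ℕ) (hk : 0 < k)
    (hk2 : ¬ ∃ m : ℕ, k = 2 ^ m)
    (h : (k = 3 ∧ n = 3) ∨
        (k % 4 = 0 ∧ 4 * n ≥ k + 8) ∨
        (k % 4 = 1 ∧ 4 * n ≥ k + 11) ∨
        (k % 4 = 2 ∧ 4 * n ≥ k + 10) ∨
        (k % 4 = 3 ∧ 4 * n ≥ k + 13)) :
    ∃ x : Fin n → ℕ,
      (∀ i, ∃ a b : ℕ, a ≤ 2 ∧ x i = 2 ^ a * k ^ b) ∧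
      (∑ i, (1 : ℚ) / (x i)) = 1 ∧
      (∃ i, k ∣ x i) := by
  rcases h with ⟨rfl, rfl⟩ | h
  · refine exists_nontrivial_solution_of_list [3, 3, 3] ?_ (by norm_num) ⟨3, by simp⟩
    simpa using ⟨0, 1, by norm_num⟩
  have hk3 : 3 ≤ k := by
    have hk_ne_one : k ≠ 1 := fun h => hk2 ⟨0, h⟩
    have hk_ne_two : k ≠ 2 := fun h => hk2 ⟨1, h⟩
    omega
  obtain ⟨l, hlen, hl, hsum⟩ := isSumOfUnitFractions_quarter hk3 (m := n - 2)
    (by omega) (by omega)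
  obtain ⟨y, hy⟩ : ∃ y, y ∈ l := List.exists_mem_of_length_pos (by omega)
  obtain rfl : (2 :: 4 :: l).length = n := by simp only [List.length_cons]; omega
  refine exists_nontrivial_solution_of_list _ ?_ ?_ ⟨y, by simp [hy], (hl y hy).2⟩
  · simp only [List.forall_mem_cons]
    exact ⟨one_two_four_subset_denominatorSet k (by simp),
      one_two_four_subset_denominatorSet k (by simp), fun x hx => (hl x hx).1⟩
  · simp only [List.map_cons, List.sum_cons, hsum]
    norm_num

/-- Proposition 4.2 (sufficiency): if `(k,n) = (3,3)` or the stated inequalities hold,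
then `∑ 1/xᵢ = 1` has a nontrivial solution in integers of the form `2^a * k^b`. -/
theorem nontrivial_solution_of_bound (k n : ℕ) (hk : 0 < k)
    (hk2 : ¬ ∃ m : ℕ, k = 2 ^ m) (hn : 0 < n)
    (h : (k = 3 ∧ n = 3) ∨
        (k % 4 = 0 ∧ 4 * n ≥ k + 8) ∨
        (k % 4 = 1 ∧ 4 * n ≥ k + 11) ∨
        (k % 4 = 2 ∧ 4 * n ≥ k + 10) ∨
        (k % 4 = 3 ∧ 4 * n ≥ k + 13)) :
    ∃ x : Fin n → ℕ,
      (∀ i, ∃ a b : ℕ, a ≤ 2 ∧ x i = 2 ^ a * k ^ b) ∧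
      (∑ i, (1 : ℚ) / (x i)) = 1 ∧
      (∃ i, k ∣ x i) :=
  nontrivial_solution_of_bound_general k n hk hk2 h
end

section
/- Let k be a positive integer that is not a power of 2 and let n be a positive integer. If there exists a function x : Fin n → ℕ with every x i in S(k), with ∑ i, (1:ℚ)/(x i) = 1, and with k dividing x i for some i, then (k,n) = (3,3), or k ≡ 0 (mod 4) and 4n ≥ k + 8, or k ≡ 1 (mod 4) and 4n ≥ k + 11, or k ≡ 2 (mod 4) and 4n ≥ k + 10, or k ≡ 3 (mod 4) and 4n ≥ k + 13. -/
/-- Proposition 4.7 (necessity): if `∑ 1/xᵢ = 1` has a nontrivial solution in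
integers of the form `2^a * k^b`, then `(k,n) = (3,3)` or the stated inequalities hold. -/
theorem bound_of_nontrivial_solution (k n : ℕ) (hk : 0 < k)
    (hk2 : ¬ ∃ m : ℕ, k = 2 ^ m) (hn : 0 < n)
    (h : ∃ x : Fin n → ℕ,
        (∀ i, ∃ a b : ℕ, a ≤ 2 ∧ x i = 2 ^ a * k ^ b) ∧
        (∑ i, (1 : ℚ) / (x i)) = 1 ∧
        (∃ i, k ∣ x i)) :
    (k = 3 ∧ n = 3) ∨
      (k % 4 = 0 ∧ 4 * n ≥ k + 8) ∨
      (k % 4 = 1 ∧ 4 * n ≥ k + 11) ∨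
      (k % 4 = 2 ∧ 4 * n ≥ k + 10) ∨
      (k % 4 = 3 ∧ 4 * n ≥ k + 13) := by
  classical
  obtain ⟨x, hx, hsum, i₀, hi₀⟩ := h
  have hk1 : k ≠ 1 := fun h => hk2 ⟨0, by simpa using h⟩
  have hk2' : k ≠ 2 := fun h => hk2 ⟨1, by simpa using h⟩
  have hk4 : k ≠ 4 := fun h => hk2 ⟨2, by norm_num [h]⟩
  have hk3 : 3 ≤ k := by omega
  have hxpos : ∀ i, 0 < x i := by
    intro i
    obtain ⟨a, b, _, hab⟩ := hx i
    rw [hab]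
    positivity
  set A := Finset.univ.filter (fun i => x i = 1 ∨ x i = 2 ∨ x i = 4) with hAdef
  set B := Finset.univ.filter (fun i => ¬ (x i = 1 ∨ x i = 2 ∨ x i = 4)) with hBdef
  set t := A.card with htdef
  set m := B.card with hmdef
  have hcard : t + m = n := by
    rw [htdef, hmdef, hAdef, hBdef, Finset.card_filter_add_card_filter_not,
      Finset.card_univ, Fintype.card_fin]
  have hBk : ∀ i ∈ B, k ≤ x i ∧ (x i = k ∨ 2 * k ≤ x i) := by
    intro i hi
    have hnp := (Finset.mem_filter.mp hi).2
    obtain ⟨a, b, ha, hab⟩ := hx i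
    have hb : 1 ≤ b := by
      rcases Nat.eq_zero_or_pos b with hb0 | hb0
      · exfalso
        apply hnp
        subst hb0
        rw [hab]
        interval_cases a <;> norm_num
      · exact hb0
    have hkb : k ≤ k ^ b := by
      calc k = k ^ 1 := (pow_one k).symm
        _ ≤ k ^ b := Nat.pow_le_pow_right hk hb
    refine ⟨?_, ?_⟩
    · calc k ≤ k ^ b := hkb
        _ ≤ 2 ^ a * k ^ b := Nat.le_mul_of_pos_left _ (by positivity)
        _ = x i := hab.symm
    · rcases Nat.eq_zero_or_pos a with ha0 | ha1
      · rcases eq_or_lt_of_le hb with hb1 | hb2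
        · left; rw [hab, ha0, ← hb1]; simp
        · right
          have hkk : k * k ≤ k ^ b := by
            calc k * k = k ^ 2 := (sq k).symm
              _ ≤ k ^ b := Nat.pow_le_pow_right hk hb2
          rw [hab, ha0]
          simp only [pow_zero, one_mul]
          nlinarith
      · right
        rw [hab]
        calc 2 * k = 2 ^ 1 * k ^ 1 := by ring
          _ ≤ 2 ^ a * k ^ b :=
            Nat.mul_le_mul (Nat.pow_le_pow_right (by norm_num) ha1)
              (Nat.pow_le_pow_right hk hb)
  have hi₀B : i₀ ∈ B := by
    rw [hBdef, Finset.mem_filter]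
    refine ⟨Finset.mem_univ _, ?_⟩
    rintro (h1 | h1 | h1)
    · rw [h1] at hi₀; exact hk1 (Nat.dvd_one.mp hi₀)
    · rw [h1] at hi₀; have := Nat.le_of_dvd (by norm_num) hi₀; omega
    · rw [h1] at hi₀
      have h4 := Nat.le_of_dvd (by norm_num) hi₀
      have hk3' : k = 3 := by omega
      rw [hk3'] at hi₀
      norm_num at hi₀
  have hm1 : 1 ≤ m := Finset.card_pos.mpr ⟨i₀, hi₀B⟩
  have hsplit : (∑ i ∈ A, (1:ℚ)/(x i)) + (∑ i ∈ B, (1:ℚ)/(x i)) = 1 := by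
    rw [hAdef, hBdef, Finset.sum_filter_add_sum_filter_not, hsum]
  set j := ∑ i ∈ A, 4 / x i with hjdef
  have hS1 : (j : ℚ) = 4 * ∑ i ∈ A, (1:ℚ)/(x i) := by
    rw [hjdef, Nat.cast_sum, Finset.mul_sum]
    refine Finset.sum_congr rfl ?_
    intro i hi
    have hmem := (Finset.mem_filter.mp hi).2
    rcases hmem with h1 | h1 | h1 <;> rw [h1] <;> norm_num
  have hkQ : (0:ℚ) < (k:ℚ) := by exact_mod_cast hk
  have hSB : ∑ i ∈ B, (1:ℚ)/(x i) ≤ (m : ℚ) / k := by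
    calc ∑ i ∈ B, (1:ℚ)/(x i) ≤ ∑ _i ∈ B, (1:ℚ)/(k:ℚ) := by
          refine Finset.sum_le_sum fun i hi => ?_
          exact one_div_le_one_div_of_le hkQ (by exact_mod_cast (hBk i hi).1)
      _ = (m:ℚ)/k := by
          rw [Finset.sum_const, nsmul_eq_mul, ← hmdef]; ring
  have hSBpos : 0 < ∑ i ∈ B, (1:ℚ)/(x i) := by
    refine Finset.sum_pos (fun i _ => ?_) ⟨i₀, hi₀B⟩
    have := hxpos i
    positivity
  have hj3 : j ≤ 3 := by
    by_contra hj
    push_neg at hj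
    have h4 : (4:ℚ) ≤ (j:ℚ) := by exact_mod_cast hj
    linarith [hsplit, hS1, hSBpos]
  have hmain : (4 - j) * k ≤ 4 * m := by
    have h1 : 4 - (j:ℚ) ≤ 4 * ((m:ℚ)/k) := by linarith [hsplit, hS1, hSB]
    have h3 := mul_le_mul_of_nonneg_right h1 hkQ.le
    have h4 : 4 * ((m:ℚ)/k) * (k:ℚ) = 4 * m := by field_simp
    have h2 : (4 - (j:ℚ)) * k ≤ 4 * (m:ℚ) := by linarith
    have hj4 : j ≤ 4 := by omega
    rw [show (4:ℚ) - (j:ℚ) = ((4 - j : ℕ) : ℚ) by rw [Nat.cast_sub hj4]; norm_num] at h2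
    exact_mod_cast h2
  have hjt : j ≤ 4 * t := by
    have h1 : j ≤ ∑ _i ∈ A, 4 := by
      rw [hjdef]; exact Finset.sum_le_sum fun i _ => Nat.div_le_self 4 (x i)
    have h2 : ∑ _i ∈ A, 4 = t * 4 := by
      rw [Finset.sum_const, smul_eq_mul, ← htdef]
    omega
  have ht3 : j = 3 → 2 ≤ t := by
    intro hj
    by_contra hcon
    push_neg at hcon
    have hAc : A.card = 0 ∨ A.card = 1 := by
      have : t = 0 ∨ t = 1 := by omega
      rcases this with h0 | h0
      · left; rw [← htdef]; exact h0
      · right; rw [← htdef]; exact h0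
    rcases hAc with h0 | h1
    · rw [Finset.card_eq_zero] at h0
      have : j = 0 := by rw [hjdef, h0, Finset.sum_empty]
      omega
    · obtain ⟨i, hAi⟩ := Finset.card_eq_one.mp h1
      have hiA : i ∈ A := by rw [hAi]; exact Finset.mem_singleton_self i
      have hxi := (Finset.mem_filter.mp hiA).2
      have hji : j = 4 / x i := by rw [hjdef, hAi, Finset.sum_singleton]
      rcases hxi with h1' | h1' | h1' <;> rw [h1'] at hji <;> omega
  have hR : j = 3 → k % 4 = 3 → k + 5 ≤ 4 * m := by
    intro hj hk43
    have hjq : (j:ℚ) = 3 := by rw [hj]; norm_num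
    have hSB14 : ∑ i ∈ B, (1:ℚ)/(x i) = 1/4 := by linarith [hsplit, hS1]
    by_cases hall : ∀ i ∈ B, x i = k
    · exfalso
      have hBm : ∑ i ∈ B, (1:ℚ)/(x i) = (m:ℚ)/k := by
        rw [Finset.sum_congr rfl fun i hi => by rw [hall i hi]]
        rw [Finset.sum_const, nsmul_eq_mul, ← hmdef]; ring
      have hmk : (m:ℚ)/(k:ℚ) = 1/4 := by rw [← hBm]; exact hSB14
      rw [div_eq_div_iff (ne_of_gt hkQ) (by norm_num)] at hmk
      have h4m : 4 * m = k := by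
        have : (4:ℚ) * m = k := by linarith
        exact_mod_cast this
      omega
    · push_neg at hall
      obtain ⟨i1, hi1B, hi1⟩ := hall
      have h2k : 2 * k ≤ x i1 := ((hBk i1 hi1B).2).resolve_left hi1
      have herase : (1:ℚ)/(x i1) + ∑ i ∈ B.erase i1, (1:ℚ)/(x i) = ∑ i ∈ B, (1:ℚ)/(x i) :=
        Finset.add_sum_erase B (fun i => (1:ℚ)/(x i)) hi1B
      have hb1 : (1:ℚ)/(x i1) ≤ 1/(2*(k:ℚ)) := by
        apply one_div_le_one_div_of_le (by positivity)
        exact_mod_cast h2k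
      have hb2 : ∑ i ∈ B.erase i1, (1:ℚ)/(x i) ≤ ((m - 1 : ℕ):ℚ)/k := by
        calc ∑ i ∈ B.erase i1, (1:ℚ)/(x i) ≤ ∑ _i ∈ B.erase i1, (1:ℚ)/(k:ℚ) := by
              refine Finset.sum_le_sum fun i hi => ?_
              exact one_div_le_one_div_of_le hkQ
                (by exact_mod_cast (hBk i (Finset.mem_of_mem_erase hi)).1)
          _ = ((m - 1 : ℕ):ℚ)/k := by
              rw [Finset.sum_const, Finset.card_erase_of_mem hi1B, ← hmdef, nsmul_eq_mul]
              ring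
      have hq : (1:ℚ)/4 ≤ 1/(2*(k:ℚ)) + ((m - 1 : ℕ):ℚ)/k := by
        linarith [hSB14, herase, hb1, hb2]
      have hkey : (1:ℚ)/(2*(k:ℚ)) + ((m - 1 : ℕ):ℚ)/k
          = (2 + 4*((m - 1 : ℕ):ℚ))/(4*(k:ℚ)) := by
        field_simp
        ring
      rw [hkey, div_le_div_iff₀ (by norm_num) (by positivity)] at hq
      have hfin : (k:ℚ) ≤ 2 + 4*((m - 1 : ℕ):ℚ) := by linarith
      have hN : k ≤ 2 + 4*(m-1) := by exact_mod_cast hfin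
      omega
  clear_value j t m
  have hj03 : j = 0 ∨ j = 1 ∨ j = 2 ∨ j = 3 := by omega
  rcases hj03 with rfl | rfl | rfl | rfl
  · omega
  · omega
  · omega
  · have ht2 := ht3 rfl
    by_cases hr : k % 4 = 3
    · have h5 := hR rfl hr
      omega
    · omega
end

section
/- Let k be a positive integer that is not a power of 2, and let c : Fin 3 → ℕ → ℕ be a counting array of a solution, i.e., c is finitely supported and ∑_{a<3, b} (c a b : ℚ)/(2^a * k^b) = 1. Let β be the largest b such that c a b ≠ 0 for some a. If β ≥ 1, then k divides 4·(c 0 β) + 2·(c 1 β) + (c 2 β). -/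
/-- Lemma 2.6(b): if `c` is the counting array of a solution of `∑ 1/xᵢ = 1` in
integers of the form `2^a * k^b` and `β ≥ 1` is the index of its top nonzero row,
then `k` divides `4·c₀β + 2·c₁β + c₂β`. -/
theorem top_row_divisibility (k : ℕ) (hk : 0 < k)
    (hk2 : ¬ ∃ m : ℕ, k = 2 ^ m)
    (c : Fin 3 → ℕ → ℕ)
    (hfin : {p : Fin 3 × ℕ | c p.1 p.2 ≠ 0}.Finite)
    (hsum : ∑ᶠ (a : Fin 3) (b : ℕ), (c a b : ℚ) / (2 ^ (a : ℕ) * (k : ℚ) ^ b) = 1)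
    (β : ℕ) (hβtop : ∃ a, c a β ≠ 0) (hβmax : ∀ b, (∃ a, c a b ≠ 0) → b ≤ β)
    (hβ1 : 1 ≤ β) :
    k ∣ 4 * c 0 β + 2 * c 1 β + c 2 β := by
  have hkQ : (k : ℚ) ≠ 0 := by positivity
  -- turn the finsum into finite sums
  have hsum' : ∑ a : Fin 3, ∑ b ∈ Finset.range (β + 1),
      (c a b : ℚ) / (2 ^ (a : ℕ) * (k : ℚ) ^ b) = 1 := by
    rw [← hsum, finsum_eq_sum_of_fintype]
    refine Finset.sum_congr rfl fun a _ => ?_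
    refine (finsum_eq_finset_sum_of_support_subset _ ?_).symm
    intro b hb
    simp only [Function.mem_support, ne_eq] at hb
    have hc : c a b ≠ 0 := by
      intro h
      apply hb
      simp [h]
    have := hβmax b ⟨a, hc⟩
    simp [Finset.mem_range]
    omega
  -- key integer identity
  have key : ∑ b ∈ Finset.range (β + 1), ∑ a : Fin 3,
      c a b * 2 ^ (2 - (a : ℕ)) * k ^ (β - b) = 4 * k ^ β := by
    have hcast : ((∑ b ∈ Finset.range (β + 1), ∑ a : Fin 3,
        c a b * 2 ^ (2 - (a : ℕ)) * k ^ (β - b) : ℕ) : ℚ) = 4 * (k : ℚ) ^ β := by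
      push_cast
      rw [Finset.sum_comm]
      have : ∀ a : Fin 3, ∀ b ∈ Finset.range (β + 1),
          (c a b : ℚ) * 2 ^ (2 - (a : ℕ)) * (k : ℚ) ^ (β - b)
          = 4 * (k : ℚ) ^ β * ((c a b : ℚ) / (2 ^ (a : ℕ) * (k : ℚ) ^ b)) := by
        intro a b hb
        have ha : (a : ℕ) ≤ 2 := by omega
        have hb' : b ≤ β := by simp [Finset.mem_range] at hb; omega
        have h2 : (2 : ℚ) ^ (2 - (a : ℕ)) * 2 ^ (a : ℕ) = 4 := by
          rw [← pow_add]
          norm_num [Nat.sub_add_cancel ha]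
        have hkp : (k : ℚ) ^ (β - b) * (k : ℚ) ^ b = (k : ℚ) ^ β := by
          rw [← pow_add, Nat.sub_add_cancel hb']
        rw [← mul_div_assoc, eq_div_iff (by positivity)]
        linear_combination ((c a b : ℚ) * (k : ℚ) ^ (β - b) * (k : ℚ) ^ b) * h2
          + ((c a b : ℚ) * 4) * hkp
      calc ∑ a : Fin 3, ∑ b ∈ Finset.range (β + 1),
            (c a b : ℚ) * 2 ^ (2 - (a : ℕ)) * (k : ℚ) ^ (β - b)
          = ∑ a : Fin 3, ∑ b ∈ Finset.range (β + 1),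
            4 * (k : ℚ) ^ β * ((c a b : ℚ) / (2 ^ (a : ℕ) * (k : ℚ) ^ b)) := by
            exact Finset.sum_congr rfl fun a _ =>
              Finset.sum_congr rfl fun b hb => this a b hb
        _ = 4 * (k : ℚ) ^ β := by
            simp only [← Finset.mul_sum]
            rw [hsum', mul_one]
    exact_mod_cast hcast
  rw [Finset.sum_range_succ] at key
  have h1 : k ∣ ∑ b ∈ Finset.range β, ∑ a : Fin 3,
      c a b * 2 ^ (2 - (a : ℕ)) * k ^ (β - b) := by
    refine Finset.dvd_sum fun b hb => Finset.dvd_sum fun a _ => ?_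
    have : b < β := Finset.mem_range.mp hb
    exact Dvd.dvd.mul_left (dvd_pow_self k (by omega)) _
  have h2 : k ∣ 4 * k ^ β := Dvd.dvd.mul_left (dvd_pow_self k (by omega)) _
  have h3 : k ∣ ∑ a : Fin 3, c a β * 2 ^ (2 - (a : ℕ)) * k ^ (β - β) :=
    (Nat.dvd_add_right h1).mp (key ▸ h2)
  have h4 : ∑ a : Fin 3, c a β * 2 ^ (2 - (a : ℕ)) * k ^ (β - β)
      = 4 * c 0 β + 2 * c 1 β + c 2 β := by
    rw [Fin.sum_univ_three]
    simp [Nat.sub_self]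
    ring
  rwa [h4] at h3
end

section
/- Let k be a positive integer that is not a power of 2, and let c : Fin 3 → ℕ → ℕ be a counting array of a solution, i.e., c is finitely supported and ∑_{a<3, b} (c a b : ℚ)/(2^a * k^b) = 1. Let β be the largest b such that c a b ≠ 0 for some a. If β ≥ 1 and c 2 β ≥ 1, then (c 0 β) + (c 1 β) + (c 2 β) ≥ 2. -/
/-- Lemma 4.3(c): if `c` is the counting array of a solution of `∑ 1/xᵢ = 1` in
integers of the form `2^a * k^b`, `β ≥ 1` is the index of its top nonzero row, and
`c 2 β ≥ 1`, then the entries of row `β` sum to at least 2. -/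
theorem top_row_sum_ge_two_of_c2 (k : ℕ) (hk : 0 < k)
    (hk2 : ¬ ∃ m : ℕ, k = 2 ^ m)
    (c : Fin 3 → ℕ → ℕ)
    (hfin : {p : Fin 3 × ℕ | c p.1 p.2 ≠ 0}.Finite)
    (hsum : ∑ᶠ (a : Fin 3) (b : ℕ), (c a b : ℚ) / (2 ^ (a : ℕ) * (k : ℚ) ^ b) = 1)
    (β : ℕ) (hβtop : ∃ a, c a β ≠ 0) (hβmax : ∀ b, (∃ a, c a b ≠ 0) → b ≤ β)
    (hβ1 : 1 ≤ β) (hc2 : 1 ≤ c 2 β) :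
    2 ≤ c 0 β + c 1 β + c 2 β := by
  by_contra h
  push_neg at h
  have hc0 : c 0 β = 0 := by omega
  have hc1 : c 1 β = 0 := by omega
  have hc2' : c 2 β = 1 := by omega
  have hkQ : (k : ℚ) ≠ 0 := by positivity
  -- The finite set of column indices
  set T : Finset ℕ := insert β (hfin.toFinset.image Prod.snd) with hT
  have hβT : β ∈ T := Finset.mem_insert_self _ _
  have hmemT : ∀ a b, c a b ≠ 0 → b ∈ T := by
    intro a b hcb
    exact Finset.mem_insert_of_mem (Finset.mem_image.mpr ⟨(a, b), hfin.mem_toFinset.mpr hcb, rfl⟩)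
  have hTle : ∀ b ∈ T, b ≤ β := by
    intro b hb
    rcases Finset.mem_insert.mp hb with rfl | hb
    · exact le_rfl
    · rcases Finset.mem_image.mp hb with ⟨p, hp, rfl⟩
      exact hβmax p.2 ⟨p.1, hfin.mem_toFinset.mp hp⟩
  -- rewrite the finsum as a finite sum
  have key : ∑ a : Fin 3, ∑ b ∈ T, (c a b : ℚ) / (2 ^ (a : ℕ) * (k : ℚ) ^ b) = 1 := by
    rw [← hsum, finsum_eq_sum_of_fintype]
    refine Finset.sum_congr rfl fun a _ => ?_
    rw [finsum_eq_sum_of_support_subset]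
    intro b hb
    simp only [Function.mem_support] at hb
    have : c a b ≠ 0 := by
      intro h0
      apply hb
      rw [h0]; simp
    exact hmemT a b this
  -- multiply by 4 * k^β
  have key2 : ∑ a : Fin 3, ∑ b ∈ T,
      ((c a b : ℚ) * 2 ^ (2 - (a : ℕ)) * (k : ℚ) ^ (β - b)) = 4 * (k : ℚ) ^ β := by
    have := congrArg (· * (4 * (k : ℚ) ^ β)) key
    simp only [one_mul, Finset.sum_mul] at this
    rw [← this]
    refine Finset.sum_congr rfl fun a _ => Finset.sum_congr rfl fun b hb => ?_
    have ha : (a : ℕ) ≤ 2 := by omega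
    have hb' : b ≤ β := hTle b hb
    have h2 : (2 : ℚ) ^ (2 - (a : ℕ)) * 2 ^ (a : ℕ) = 4 := by
      rw [← pow_add, Nat.sub_add_cancel ha]; norm_num
    have hkk : (k : ℚ) ^ (β - b) * (k : ℚ) ^ b = (k : ℚ) ^ β := by
      rw [← pow_add, Nat.sub_add_cancel hb']
    have hne : (2 : ℚ) ^ (a : ℕ) * (k : ℚ) ^ b ≠ 0 := by positivity
    field_simp
    rw [← h2, ← hkk]
    ring
  -- cast down to ℕ
  have key3 : ∑ a : Fin 3, ∑ b ∈ T, c a b * 2 ^ (2 - (a : ℕ)) * k ^ (β - b) = 4 * k ^ β := by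
    have : ((∑ a : Fin 3, ∑ b ∈ T, c a b * 2 ^ (2 - (a : ℕ)) * k ^ (β - b) : ℕ) : ℚ)
        = ((4 * k ^ β : ℕ) : ℚ) := by
      push_cast
      rw [key2]
    exact_mod_cast this
  -- pass to ZMod k
  haveI : NeZero k := ⟨hk.ne'⟩
  have key4 := congrArg (Nat.cast : ℕ → ZMod k) key3
  push_cast at key4
  rw [ZMod.natCast_self] at key4
  have hzero : ∀ b ∈ T, b ≠ β → ((0 : ZMod k)) ^ (β - b) = 0 := by
    intro b hb hne
    exact zero_pow (by have := hTle b hb; omega)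
  have hβ0 : ((0 : ZMod k)) ^ β = 0 := zero_pow (by omega)
  rw [hβ0, mul_zero] at key4
  rw [Finset.sum_comm, ← Finset.add_sum_erase _ _ hβT] at key4
  have hrest : ∑ b ∈ T.erase β, ∑ a : Fin 3,
      (c a b : ZMod k) * 2 ^ (2 - (a : ℕ)) * (0 : ZMod k) ^ (β - b) = 0 := by
    refine Finset.sum_eq_zero fun b hb => ?_
    refine Finset.sum_eq_zero fun a _ => ?_
    rw [hzero b (Finset.mem_of_mem_erase hb) (Finset.ne_of_mem_erase hb), mul_zero]
  rw [hrest, add_zero] at key4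
  have hfin3 : ∑ a : Fin 3, (c a β : ZMod k) * 2 ^ (2 - (a : ℕ)) * (0 : ZMod k) ^ (β - β) =
      1 := by
    rw [Fin.sum_univ_three]
    simp [hc0, hc1, hc2']
  rw [hfin3] at key4
  -- so k ∣ 1
  have : k ∣ 1 := by
    have := (ZMod.natCast_eq_zero_iff 1 k).mp (by exact_mod_cast key4)
    exact this
  have hk1 : k = 1 := Nat.dvd_one.mp this
  exact hk2 ⟨0, by simp [hk1]⟩
end

section
/- Let k be a positive integer that is not a power of 2, and let c : Fin 3 → ℕ → ℕ be a counting array of a solution, i.e., c is finitely supported and ∑_{a<3, b} (c a b : ℚ)/(2^a * k^b) = 1. Let β be the largest b such that c a b ≠ 0 for some a. If β ≥ 1 and c 1 β ≥ 1, then (c 0 β) + (c 1 β) + (c 2 β) ≥ 2. -/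
/-- Lemma 4.3(d): if `c` is the counting array of a solution of `∑ 1/xᵢ = 1` in
integers of the form `2^a * k^b`, `β ≥ 1` is the index of its top nonzero row, and
`c 1 β ≥ 1`, then the entries of row `β` sum to at least 2. -/
theorem top_row_sum_ge_two_of_c1 (k : ℕ) (hk : 0 < k)
    (hk2 : ¬ ∃ m : ℕ, k = 2 ^ m)
    (c : Fin 3 → ℕ → ℕ)
    (hfin : {p : Fin 3 × ℕ | c p.1 p.2 ≠ 0}.Finite)
    (hsum : ∑ᶠ (a : Fin 3) (b : ℕ), (c a b : ℚ) / (2 ^ (a : ℕ) * (k : ℚ) ^ b) = 1)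
    (β : ℕ) (hβtop : ∃ a, c a β ≠ 0) (hβmax : ∀ b, (∃ a, c a b ≠ 0) → b ≤ β)
    (hβ1 : 1 ≤ β) (hc1 : 1 ≤ c 1 β) :
    2 ≤ c 0 β + c 1 β + c 2 β := by
  by_contra h
  push_neg at h
  have hc0 : c 0 β = 0 := by omega
  have hc1' : c 1 β = 1 := by omega
  have hc2 : c 2 β = 0 := by omega
  have hkQ : (k : ℚ) ≠ 0 := by positivity
  -- convert finsum to finite sums
  rw [finsum_eq_sum_of_fintype] at hsum
  have hsupp : ∀ a : Fin 3,
      (Function.support fun b => (c a b : ℚ) / (2 ^ (a : ℕ) * (k : ℚ) ^ b)) ⊆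
        ↑(Finset.range (β + 1)) := by
    intro a b hb
    simp only [Finset.coe_range, Set.mem_Iio]
    by_contra hlt
    push_neg at hlt
    have : c a b = 0 := by
      by_contra hne
      have := hβmax b ⟨a, hne⟩
      omega
    simp [Function.mem_support, this] at hb
  have hsum' : ∑ a : Fin 3, ∑ b ∈ Finset.range (β + 1),
      (c a b : ℚ) / (2 ^ (a : ℕ) * (k : ℚ) ^ b) = 1 := by
    rw [← hsum]
    exact Finset.sum_congr rfl fun a _ =>
      (finsum_eq_sum_of_support_subset _ (hsupp a)).symm
  -- key natural-number equation
  have hterm : ∀ (a : Fin 3) (b : ℕ), b ∈ Finset.range (β + 1) →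
      ((c a b : ℚ) / (2 ^ (a : ℕ) * (k : ℚ) ^ b)) * (4 * (k : ℚ) ^ β) =
        ((c a b * (2 ^ (2 - (a : ℕ)) * k ^ (β - b)) : ℕ) : ℚ) := by
    intro a b hb
    have ha : (a : ℕ) ≤ 2 := by omega
    have hbb : b ≤ β := by simpa using Finset.mem_range_succ_iff.mp hb
    push_cast
    rw [div_mul_eq_mul_div, div_eq_iff (by positivity)]
    rw [show (4 : ℚ) = 2 ^ (2 - (a : ℕ)) * 2 ^ (a : ℕ) by
          rw [← pow_add, show 2 - (a : ℕ) + a = 2 by omega]; norm_num,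
        show (k : ℚ) ^ β = k ^ (β - b) * k ^ b by
          rw [← pow_add]; congr 1; omega]
    ring
  have keyQ : ((∑ a : Fin 3, ∑ b ∈ Finset.range (β + 1),
      c a b * (2 ^ (2 - (a : ℕ)) * k ^ (β - b)) : ℕ) : ℚ) = 4 * (k : ℚ) ^ β := by
    rw [Nat.cast_sum]
    rw [Finset.sum_congr rfl fun a _ => Nat.cast_sum _ _]
    rw [Finset.sum_congr rfl fun a _ =>
      Finset.sum_congr rfl fun b hb => (hterm a b hb).symm]
    rw [Finset.sum_congr rfl fun (a : Fin 3) _ =>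
      (Finset.sum_mul (Finset.range (β + 1))
        (fun b => (c a b : ℚ) / (2 ^ (a : ℕ) * (k : ℚ) ^ b)) (4 * (k : ℚ) ^ β)).symm]
    rw [← Finset.sum_mul, hsum', one_mul]
  have key : ∑ a : Fin 3, ∑ b ∈ Finset.range (β + 1),
      c a b * (2 ^ (2 - (a : ℕ)) * k ^ (β - b)) = 4 * k ^ β := by
    exact_mod_cast keyQ
  -- split off b = β
  rw [show β + 1 = β + 1 from rfl] at key
  simp only [Finset.sum_range_succ] at key
  rw [Finset.sum_add_distrib] at key
  have hrow : ∑ a : Fin 3, c a β * (2 ^ (2 - (a : ℕ)) * k ^ (β - β)) = 2 := by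
    rw [Fin.sum_univ_three]
    simp [hc0, hc1', hc2]
  rw [hrow] at key
  have hdvd1 : k ∣ ∑ a : Fin 3, ∑ b ∈ Finset.range β,
      c a b * (2 ^ (2 - (a : ℕ)) * k ^ (β - b)) := by
    refine Finset.dvd_sum fun a _ => Finset.dvd_sum fun b hb => ?_
    have : β - b ≠ 0 := by simp at hb; omega
    exact Dvd.dvd.mul_left (Dvd.dvd.mul_left (dvd_pow_self k this) _) _
  have hdvd2 : k ∣ 4 * k ^ β := Dvd.dvd.mul_left (dvd_pow_self k (by omega)) 4
  have hk2' : k ∣ 2 := (Nat.dvd_add_right hdvd1).mp (key ▸ hdvd2)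
  have hkle : k ≤ 2 := Nat.le_of_dvd (by norm_num) hk2'
  interval_cases k
  · exact hk2 ⟨0, rfl⟩
  · exact hk2 ⟨1, rfl⟩
end

section
/- Let k ≥ 9 be a positive integer that is not a power of 2 and let n be a positive integer. There is no injective function x : Fin n → ℕ with every x i in S(k), with ∑ i, (1:ℚ)/(x i) = 1, and with k dividing x i for some i. In other words, for k ≥ 9 there are no nontrivial solutions of ∑_{i=1}^n 1/x_i = 1 in distinct integers of S(k). -/
/-- For `k ≥ 9` not a power of 2, there are no nontrivial solutions of
`∑ 1/xᵢ = 1` in distinct integers of the form `2^a * k^b` (`a ∈ {0,1,2}`, `b ≥ 0`). -/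
theorem no_distinct_nontrivial_solution (k n : ℕ) (hk : 9 ≤ k)
    (hk2 : ¬ ∃ m : ℕ, k = 2 ^ m) (hn : 0 < n) :
    ¬ ∃ x : Fin n → ℕ, Function.Injective x ∧
        (∀ i, ∃ a b : ℕ, a ≤ 2 ∧ x i = 2 ^ a * k ^ b) ∧
        (∑ i, (1 : ℚ) / (x i)) = 1 ∧
        (∃ i, k ∣ x i) := by
  rintro ⟨x, hinj, hmem, hsum, i0, hdvd⟩
  have hk0 : 0 < k := by omega
  have hxpos : ∀ i, 0 < x i := by
    intro i
    obtain ⟨a, b, _, h⟩ := hmem i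
    rw [h]; positivity
  -- no `x i` equals 1
  have hne1 : ∀ i, x i ≠ 1 := by
    intro i h1
    have hi0 : i ≠ i0 := by
      intro h; rw [h] at h1
      have := Nat.le_of_dvd (hxpos i0) hdvd
      omega
    have h2 : (1:ℚ)/(x i) + (1:ℚ)/(x i0) ≤ ∑ j, (1:ℚ)/(x j) := by
      calc (1:ℚ)/(x i) + (1:ℚ)/(x i0)
          = ∑ j ∈ ({i, i0} : Finset (Fin n)), (1:ℚ)/(x j) := by
            rw [Finset.sum_pair hi0]
        _ ≤ _ := Finset.sum_le_sum_of_subset_of_nonneg (Finset.subset_univ _)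
            (by intros; positivity)
    rw [hsum, h1] at h2
    have hp : (0:ℚ) < 1/(x i0) := by
      have h0 := hxpos i0
      have : (0:ℚ) < (x i0 : ℚ) := by exact_mod_cast h0
      positivity
    push_cast at h2
    linarith
  choose a b ha hx using hmem
  set B := (Finset.univ.sup b) + 1 with hB
  have hbB : ∀ i, b i < B := fun i => Nat.lt_succ_of_le (Finset.le_sup (Finset.mem_univ i))
  set f : ℕ × ℕ → ℚ := fun p => 1 / (2 ^ p.1 * (k:ℚ) ^ p.2) with hf
  set T : Finset (ℕ × ℕ) := Finset.range 3 ×ˢ Finset.range B with hT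
  have hmaps : ∀ i, (a i, b i) ∈ T.erase (0,0) := by
    intro i
    refine Finset.mem_erase.2 ⟨?_, ?_⟩
    · intro h
      apply hne1 i
      rw [hx i]
      have h1 : a i = 0 := by simpa using congrArg Prod.fst h
      have h2 : b i = 0 := by simpa using congrArg Prod.snd h
      simp [h1, h2]
    · exact Finset.mem_product.2 ⟨Finset.mem_range.2 (by have := ha i; omega),
        Finset.mem_range.2 (hbB i)⟩
  have hpinj : ∀ i ∈ Finset.univ, ∀ j ∈ Finset.univ,
      (fun i => (a i, b i)) i = (fun i => (a i, b i)) j → i = j := by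
    intro i _ j _ h
    apply hinj
    have h1 : a i = a j := congrArg Prod.fst h
    have h2 : b i = b j := congrArg Prod.snd h
    rw [hx i, hx j, h1, h2]
  -- the sum is bounded by the sum of f over T.erase (0,0)
  have hle : (1:ℚ) ≤ ∑ p ∈ T.erase (0,0), f p := by
    rw [← hsum]
    have key : ∀ i ∈ Finset.univ, (1:ℚ)/(x i) = f (a i, b i) := by
      intro i _; rw [hx i, hf]; push_cast; ring
    rw [Finset.sum_congr rfl key, ← Finset.sum_image hpinj]
    refine Finset.sum_le_sum_of_subset_of_nonneg ?_ (by
      intro p _ _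
      rw [hf]
      have hk' : (0:ℚ) < (k:ℚ) := by exact_mod_cast hk0
      positivity)
    intro p hp
    obtain ⟨i, _, rfl⟩ := Finset.mem_image.1 hp
    exact hmaps i
  -- compute/bound the sum over T.erase (0,0)
  have hkQ : (9:ℚ) ≤ (k:ℚ) := by exact_mod_cast hk
  have hkpos : (0:ℚ) < (k:ℚ) := by linarith
  have hgeom : ∑ j ∈ Finset.range B, (1/(k:ℚ))^j ≤ 9/8 := by
    have h2 : (1/(k:ℚ)) ≤ 1/9 := by
      apply div_le_div_of_nonneg_left (by norm_num) (by norm_num) hkQ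
    have ht1 : (1/(k:ℚ)) ≠ 1 := ne_of_lt (by linarith)
    rw [geom_sum_eq ht1]
    have hneg : (1/(k:ℚ)) - 1 < 0 := by
      have : (1/(k:ℚ)) ≤ 1/9 := by
        apply div_le_div_of_nonneg_left (by norm_num) (by norm_num) hkQ
      linarith
    rw [div_le_iff_of_neg hneg]
    have h1 : (0:ℚ) ≤ (1/(k:ℚ))^B := by positivity
    nlinarith
  have hTsum : ∑ p ∈ T, f p = (7/4) * ∑ j ∈ Finset.range B, (1/(k:ℚ))^j := by
    rw [hT, Finset.sum_product]
    have : ∀ i ∈ Finset.range 3, ∑ j ∈ Finset.range B, f (i, j)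
        = (1/2:ℚ)^i * ∑ j ∈ Finset.range B, (1/(k:ℚ))^j := by
      intro i _
      rw [Finset.mul_sum]
      refine Finset.sum_congr rfl fun j _ => ?_
      rw [hf]
      simp [div_pow]
      ring
    rw [Finset.sum_congr rfl this, ← Finset.sum_mul]
    norm_num [Finset.sum_range_succ]
  have h00 : (0,0) ∈ T := by
    rw [hT]
    exact Finset.mem_product.2 ⟨Finset.mem_range.2 (by norm_num),
      Finset.mem_range.2 (by omega)⟩
  have herase : ∑ p ∈ T.erase (0,0), f p = ∑ p ∈ T, f p - 1 := by
    have := Finset.add_sum_erase T f h00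
    have hf00 : f (0,0) = 1 := by rw [hf]; norm_num
    rw [hf00] at this
    linarith
  rw [herase, hTsum] at hle
  linarith
end

section
/- Let k be a positive integer with k ≡ 0 (mod 4) that is not a power of 2, and let c : Fin 3 → ℕ → ℕ be a counting array of a solution, i.e., c is finitely supported and ∑_{a<3, b} (c a b : ℚ)/(2^a * k^b) = 1. Let β be the largest b such that c a b ≠ 0 for some a, and suppose β ≥ 1, c 1 β ≤ 1, and c 2 β ≤ 1. Then c 1 β = 0, c 2 β = 0, and c 0 β ≥ k/4. -/
/-- For `k ≡ 0 (mod 4)` not a power of 2: in the top nonzero row `β ≥ 1` of the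
counting array of a solution, if `c 1 β ≤ 1` and `c 2 β ≤ 1`, then
`c 1 β = 0`, `c 2 β = 0`, and `c 0 β ≥ k/4`. -/
theorem top_row_min_mod_zero (k : ℕ) (hk : 0 < k) (hkmod : k % 4 = 0)
    (hk2 : ¬ ∃ m : ℕ, k = 2 ^ m)
    (c : Fin 3 → ℕ → ℕ)
    (hfin : {p : Fin 3 × ℕ | c p.1 p.2 ≠ 0}.Finite)
    (hsum : ∑ᶠ (a : Fin 3) (b : ℕ), (c a b : ℚ) / (2 ^ (a : ℕ) * (k : ℚ) ^ b) = 1)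
    (β : ℕ) (hβtop : ∃ a, c a β ≠ 0) (hβmax : ∀ b, (∃ a, c a b ≠ 0) → b ≤ β)
    (hβ1 : 1 ≤ β) (hc1 : c 1 β ≤ 1) (hc2 : c 2 β ≤ 1) :
    c 1 β = 0 ∧ c 2 β = 0 ∧ k / 4 ≤ c 0 β := by
  have hk0 : (k : ℚ) ≠ 0 := Nat.cast_ne_zero.mpr hk.ne'
  -- reduce the finsum to a finite sum over `b ≤ β`
  have hsum' : ∑ a : Fin 3, ∑ b ∈ Finset.range (β+1),
      (c a b : ℚ) / (2 ^ (a : ℕ) * (k : ℚ) ^ b) = 1 := by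
    rw [← hsum, finsum_eq_sum_of_fintype]
    refine Finset.sum_congr rfl fun a _ => ?_
    refine (finsum_eq_finset_sum_of_support_subset _ ?_).symm
    intro b hb
    simp only [Function.mem_support] at hb
    simp only [Finset.coe_range, Set.mem_Iio, Nat.lt_succ_iff]
    by_contra h
    push_neg at h
    have hc : c a b = 0 := by
      by_contra hcb
      exact absurd (hβmax b ⟨a, hcb⟩) (by omega)
    simp [hc] at hb
  -- the integer equation obtained by multiplying through by `4 * k ^ β`
  have key : (∑ a : Fin 3, ∑ b ∈ Finset.range (β+1),
      c a b * 2 ^ (2 - (a : ℕ)) * k ^ (β - b)) = 4 * k ^ β := by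
    have h1 : ((∑ a : Fin 3, ∑ b ∈ Finset.range (β+1),
        c a b * 2 ^ (2 - (a : ℕ)) * k ^ (β - b) : ℕ) : ℚ) = ((4 * k ^ β : ℕ) : ℚ) := by
      push_cast
      calc (∑ a : Fin 3, ∑ b ∈ Finset.range (β+1),
            (c a b : ℚ) * 2 ^ (2 - (a : ℕ)) * (k : ℚ) ^ (β - b))
          = ∑ a : Fin 3, ∑ b ∈ Finset.range (β+1),
            ((c a b : ℚ) / (2 ^ (a : ℕ) * (k : ℚ) ^ b)) * (4 * (k : ℚ) ^ β) := by
            refine Finset.sum_congr rfl fun a _ => Finset.sum_congr rfl fun b hb => ?_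
            have hb' : b ≤ β := Nat.lt_succ_iff.mp (Finset.mem_range.mp hb)
            have ha : (a : ℕ) ≤ 2 := Nat.lt_succ_iff.mp a.isLt
            have h2 : (2:ℚ) ^ (2 - (a:ℕ)) * 2 ^ (a:ℕ) = 4 := by
              rw [← pow_add, Nat.sub_add_cancel ha]; norm_num
            have hkk : (k:ℚ) ^ (β - b) * (k:ℚ) ^ b = (k:ℚ) ^ β := by
              rw [← pow_add, Nat.sub_add_cancel hb']
            rw [div_mul_eq_mul_div, eq_div_iff (by positivity)]
            linear_combination (c a b : ℚ) * (k:ℚ)^(β-b) * (k:ℚ)^b * h2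
              + 4 * (c a b : ℚ) * hkk
        _ = (∑ a : Fin 3, ∑ b ∈ Finset.range (β+1),
              (c a b : ℚ) / (2 ^ (a : ℕ) * (k : ℚ) ^ b)) * (4 * (k : ℚ) ^ β) := by
            rw [Finset.sum_mul]
            exact Finset.sum_congr rfl fun a _ => (Finset.sum_mul _ _ _).symm
        _ = 4 * (k : ℚ) ^ β := by rw [hsum', one_mul]
    exact_mod_cast h1
  -- split off the top row `b = β`
  have hT : ∑ a : Fin 3, c a β * 2 ^ (2 - (a : ℕ)) = 4 * c 0 β + 2 * c 1 β + c 2 β := by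
    rw [Fin.sum_univ_three]
    norm_num
    ring
  have split : (∑ a : Fin 3, ∑ b ∈ Finset.range β,
      c a b * 2 ^ (2 - (a : ℕ)) * k ^ (β - b))
      + (4 * c 0 β + 2 * c 1 β + c 2 β) = 4 * k ^ β := by
    rw [← key]
    simp only [Finset.sum_range_succ, Nat.sub_self, pow_zero, mul_one,
      Finset.sum_add_distrib, hT]
  set R := ∑ a : Fin 3, ∑ b ∈ Finset.range β, c a b * 2 ^ (2 - (a : ℕ)) * k ^ (β - b)
    with hRdef
  have hkR : k ∣ R := Finset.dvd_sum fun a _ => Finset.dvd_sum fun b hb => by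
    have hbe : β - b ≠ 0 := by have := Finset.mem_range.mp hb; omega
    exact Dvd.dvd.mul_left (dvd_pow_self k hbe) _
  have h4k : (4:ℕ) ∣ k := by omega
  have h4R : (4:ℕ) ∣ R := dvd_trans h4k hkR
  have hkpow : k ∣ 4 * k ^ β := Dvd.dvd.mul_left (dvd_pow_self k (by omega)) 4
  have h4pow : (4:ℕ) ∣ 4 * k ^ β := dvd_mul_right 4 _
  have hc12 : c 1 β = 0 ∧ c 2 β = 0 := by
    obtain ⟨r, hr⟩ := h4R
    obtain ⟨s, hs⟩ := h4pow
    rw [hr, hs] at split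
    omega
  obtain ⟨hc1z, hc2z⟩ := hc12
  have split' : R + 4 * c 0 β = 4 * k ^ β := by
    rw [hc1z, hc2z] at split; omega
  have hdvd : k ∣ 4 * c 0 β := (Nat.dvd_add_right hkR).mp (by rw [split']; exact hkpow)
  have hc0 : c 0 β ≠ 0 := by
    obtain ⟨a, ha⟩ := hβtop
    fin_cases a <;> simp_all
  have hle : k ≤ 4 * c 0 β := Nat.le_of_dvd (by omega) hdvd
  exact ⟨hc1z, hc2z, by omega⟩
end

section
/- Let k be a positive integer with k ≡ 2 (mod 4) that is not a power of 2, and let c : Fin 3 → ℕ → ℕ be a counting array of a solution, i.e., c is finitely supported and ∑_{a<3, b} (c a b : ℚ)/(2^a * k^b) = 1. Let β be the largest b such that c a b ≠ 0 for some a, and suppose β ≥ 1, c 1 β ≤ 1, and c 2 β ≤ 1. Then c 2 β = 0; moreover, if c 1 β = 0 then c 0 β ≥ k/2, and if c 1 β = 1 then c 0 β ≥ (k-2)/4. -/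
/-! Multiplying the equation by `4 k^β` turns it into
`∑_{b ≤ β} (4 c 0 b + 2 c 1 b + c 2 b) k^(β-b) = 4 k^β` in `ℕ`. Every row below `β` contributes a
multiple of `k`, hence of `2`, so `k` and `2` both divide `4 c 0 β + 2 c 1 β + c 2 β`. Parity forces
`c 2 β = 0`, and the bounds on `c 0 β` come from `k ∣ 4 c 0 β + 2 c 1 β` with `k = 2 · odd`. -/

open Finset

/-- `4 k^b` times the contribution of row `b` to `∑ c a b / (2^a k^b)`. -/
def rowWeight (c : Fin 3 → ℕ → ℕ) (b : ℕ) : ℕ := 4 * c 0 b + 2 * c 1 b + c 2 b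

theorem finsum_div_eq_sum_rowWeight (k : ℚ) (c : Fin 3 → ℕ → ℕ) (β : ℕ)
    (hc : ∀ a b, β < b → c a b = 0) :
    ∑ᶠ (a : Fin 3) (b : ℕ), (c a b : ℚ) / (2 ^ (a : ℕ) * k ^ b) =
      (∑ b ∈ range (β + 1), (rowWeight c b : ℚ) / k ^ b) / 4 := by
  have hrow (a : Fin 3) : ∑ᶠ b : ℕ, (c a b : ℚ) / (2 ^ (a : ℕ) * k ^ b) =
      ∑ b ∈ range (β + 1), (c a b : ℚ) / (2 ^ (a : ℕ) * k ^ b) := by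
    refine finsum_eq_sum_of_support_subset _ fun b hb => ?_
    by_contra hbβ
    simp_all [hc a b (by simpa using hbβ)]
  simp only [finsum_eq_sum_of_fintype, hrow, Fin.sum_univ_three, ← sum_add_distrib, sum_div]
  refine sum_congr rfl fun b _ => ?_
  simp only [rowWeight, Fin.val_zero, Fin.val_one, Fin.val_two]
  push_cast
  ring

theorem sum_div_pow_mul_pow {K : Type*} [Field K] {k : K} (hk : k ≠ 0) (r : ℕ → K) (n : ℕ) :
    (∑ b ∈ range (n + 1), r b / k ^ b) * k ^ n = ∑ b ∈ range (n + 1), r b * k ^ (n - b) := by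
  rw [sum_mul]
  refine sum_congr rfl fun b hb => ?_
  rw [← Nat.sub_add_cancel (Nat.le_of_lt_succ (mem_range.1 hb)), pow_add, Nat.add_sub_cancel]
  field_simp

theorem dvd_of_sum_range_succ_mul_pow_eq {d k m n : ℕ} (r : ℕ → ℕ)
    (h : ∑ b ∈ range (n + 1), r b * k ^ (n - b) = m) (hdk : d ∣ k) (hdm : d ∣ m) : d ∣ r n := by
  rw [sum_range_succ, Nat.sub_self, pow_zero, mul_one] at h
  have hlow : d ∣ ∑ b ∈ range n, r b * k ^ (n - b) := dvd_sum fun b hb =>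
    (hdk.trans (dvd_pow_self k (Nat.sub_ne_zero_of_lt (mem_range.1 hb)))).mul_left _
  exact (Nat.dvd_add_right hlow).1 (h ▸ hdm)

theorem div_two_le_of_dvd_four_mul {k x : ℕ} (hk : k % 4 = 2) (hkx : k ∣ 4 * x) (hx : 0 < x) :
    k / 2 ≤ x := by
  obtain ⟨q, rfl⟩ : ∃ q, k = 2 * (2 * q + 1) := ⟨k / 4, by omega⟩
  have hodd : 2 * q + 1 ∣ 2 * x :=
    Nat.dvd_of_mul_dvd_mul_left two_pos (by rw [← mul_assoc]; exact hkx)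
  have hcop : Nat.Coprime (2 * q + 1) 2 := Nat.coprime_two_right.2 (odd_two_mul_add_one q)
  have := Nat.le_of_dvd hx (hcop.dvd_of_dvd_mul_left hodd)
  omega

theorem top_row_min_mod_two_general (k : ℕ) (hkmod : k % 4 = 2)
    (c : Fin 3 → ℕ → ℕ)
    (hsum : ∑ᶠ (a : Fin 3) (b : ℕ), (c a b : ℚ) / (2 ^ (a : ℕ) * (k : ℚ) ^ b) = 1)
    (β : ℕ) (hβtop : ∃ a, c a β ≠ 0) (hβmax : ∀ b, (∃ a, c a b ≠ 0) → b ≤ β)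
    (hβ1 : 1 ≤ β) (hc2 : c 2 β ≤ 1) :
    c 2 β = 0 ∧
      (c 1 β = 0 → k / 2 ≤ c 0 β) ∧
      (c 1 β = 1 → (k - 2) / 4 ≤ c 0 β) := by
  have hzero (a : Fin 3) (b : ℕ) (hb : β < b) : c a b = 0 := by
    by_contra h
    exact absurd (hβmax b ⟨a, h⟩) (not_le.2 hb)
  have hk : (k : ℚ) ≠ 0 := by exact_mod_cast (by omega : k ≠ 0)
  have hcleared : ∑ b ∈ range (β + 1), rowWeight c b * k ^ (β - b) = 4 * k ^ β := by
    rw [finsum_div_eq_sum_rowWeight _ _ _ hzero, div_eq_one_iff_eq four_ne_zero] at hsum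
    have := sum_div_pow_mul_pow hk (fun b => (rowWeight c b : ℚ)) β
    rw [hsum] at this
    exact_mod_cast this.symm
  have htwo := dvd_of_sum_range_succ_mul_pow_eq _ hcleared (Nat.dvd_of_mod_eq_zero (by omega))
    ((dvd_mul_right 2 2).mul_right (k ^ β))
  have hkdvd := dvd_of_sum_range_succ_mul_pow_eq _ hcleared dvd_rfl
    ((dvd_pow_self k (by omega)).mul_left 4)
  simp only [rowWeight] at htwo hkdvd
  have hc2z : c 2 β = 0 := by omega
  refine ⟨hc2z, fun hc1 => ?_, fun hc1 => ?_⟩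
  · rw [hc1, hc2z, mul_zero, add_zero, add_zero] at hkdvd
    obtain ⟨a, ha⟩ := hβtop
    exact div_two_le_of_dvd_four_mul hkmod hkdvd (by fin_cases a <;> simp_all [Nat.pos_iff_ne_zero])
  · have := Nat.le_of_dvd (by omega) hkdvd
    omega

/-- For `k ≡ 2 (mod 4)` not a power of 2: in the top nonzero row `β ≥ 1` of the
counting array of a solution, if `c 1 β ≤ 1` and `c 2 β ≤ 1`, then `c 2 β = 0`;
moreover if `c 1 β = 0` then `c 0 β ≥ k/2`, and if `c 1 β = 1` then `c 0 β ≥ (k-2)/4`. -/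
theorem top_row_min_mod_two (k : ℕ) (hk : 0 < k) (hkmod : k % 4 = 2)
    (hk2 : ¬ ∃ m : ℕ, k = 2 ^ m)
    (c : Fin 3 → ℕ → ℕ)
    (hfin : {p : Fin 3 × ℕ | c p.1 p.2 ≠ 0}.Finite)
    (hsum : ∑ᶠ (a : Fin 3) (b : ℕ), (c a b : ℚ) / (2 ^ (a : ℕ) * (k : ℚ) ^ b) = 1)
    (β : ℕ) (hβtop : ∃ a, c a β ≠ 0) (hβmax : ∀ b, (∃ a, c a b ≠ 0) → b ≤ β)
    (hβ1 : 1 ≤ β) (hc1 : c 1 β ≤ 1) (hc2 : c 2 β ≤ 1) :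
    c 2 β = 0 ∧
      (c 1 β = 0 → k / 2 ≤ c 0 β) ∧
      (c 1 β = 1 → (k - 2) / 4 ≤ c 0 β) :=
  top_row_min_mod_two_general k hkmod c hsum β hβtop hβmax hβ1 hc2
end

section
/- Let k be a positive integer with k ≡ 1 (mod 4) and k > 1, and let c : Fin 3 → ℕ → ℕ be a counting array of a solution, i.e., c is finitely supported and ∑_{a<3, b} (c a b : ℚ)/(2^a * k^b) = 1. Let β be the largest b such that c a b ≠ 0 for some a, and suppose β ≥ 1, c 1 β ≤ 1, and c 2 β ≤ 1. Then: if (c 1 β, c 2 β) = (0,0) then c 0 β ≥ k; if (c 1 β, c 2 β) = (0,1) then c 0 β ≥ (k-1)/4; if (c 1 β, c 2 β) = (1,0) then c 0 β ≥ (k-1)/2; and if (c 1 β, c 2 β) = (1,1) then c 0 β ≥ (3k-3)/4. -/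
/-- For `k ≡ 1 (mod 4)`, `k > 1`: in the top nonzero row `β ≥ 1` of the counting
array of a solution with `c 1 β ≤ 1` and `c 2 β ≤ 1`, the entry `c 0 β` is at least
`k`, `(k-1)/4`, `(k-1)/2`, `(3k-3)/4` according as `(c 1 β, c 2 β)` is
`(0,0)`, `(0,1)`, `(1,0)`, `(1,1)`. -/
theorem top_row_min_mod_one (k : ℕ) (hkmod : k % 4 = 1) (hk1 : 1 < k)
    (c : Fin 3 → ℕ → ℕ)
    (hfin : {p : Fin 3 × ℕ | c p.1 p.2 ≠ 0}.Finite)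
    (hsum : ∑ᶠ (a : Fin 3) (b : ℕ), (c a b : ℚ) / (2 ^ (a : ℕ) * (k : ℚ) ^ b) = 1)
    (β : ℕ) (hβtop : ∃ a, c a β ≠ 0) (hβmax : ∀ b, (∃ a, c a b ≠ 0) → b ≤ β)
    (hβ1 : 1 ≤ β) (hc1 : c 1 β ≤ 1) (hc2 : c 2 β ≤ 1) :
    ((c 1 β, c 2 β) = (0, 0) → k ≤ c 0 β) ∧
      ((c 1 β, c 2 β) = (0, 1) → (k - 1) / 4 ≤ c 0 β) ∧
      ((c 1 β, c 2 β) = (1, 0) → (k - 1) / 2 ≤ c 0 β) ∧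
      ((c 1 β, c 2 β) = (1, 1) → (3 * k - 3) / 4 ≤ c 0 β) := by
  have hkq : (k : ℚ) ≠ 0 := by positivity
  -- Step 1: finsum → finite sum over range (β+1)
  have hsum' : ∑ a : Fin 3, ∑ b ∈ Finset.range (β+1),
      (c a b : ℚ) / (2 ^ (a : ℕ) * (k : ℚ) ^ b) = 1 := by
    rw [← hsum, finsum_eq_sum_of_fintype]
    refine Finset.sum_congr rfl fun a _ => ?_
    refine (finsum_eq_finset_sum_of_support_subset _ ?_).symm
    intro b hb
    simp only [Function.mem_support] at hb
    have hcb : c a b ≠ 0 := by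
      intro h; rw [h] at hb; simp at hb
    simp only [Finset.coe_range, Set.mem_Iio]
    exact Nat.lt_succ_of_le (hβmax b ⟨a, hcb⟩)
  -- Step 2: term rewriting
  have hterm : ∀ (a : Fin 3), ∀ b ∈ Finset.range (β+1),
      ((c a b : ℚ) * (2 ^ (2-(a:ℕ)) * (k:ℚ) ^ (β-b)))
        = ((c a b : ℚ) / (2 ^ (a:ℕ) * (k:ℚ) ^ b)) * (4 * (k:ℚ)^β) := by
    intro a b hb
    have ha : (a:ℕ) ≤ 2 := Nat.lt_succ_iff.mp a.isLt
    have hb' : b ≤ β := Nat.lt_succ_iff.mp (Finset.mem_range.mp hb)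
    have h2 : (2:ℚ)^(2-(a:ℕ)) * 2^(a:ℕ) = 4 := by
      rw [← pow_add, Nat.sub_add_cancel ha]; norm_num
    have hk : (k:ℚ)^(β-b) * (k:ℚ)^b = (k:ℚ)^β := by
      rw [← pow_add, Nat.sub_add_cancel hb']
    have hne : (2:ℚ)^(a:ℕ) * (k:ℚ)^b ≠ 0 := by positivity
    rw [div_mul_eq_mul_div, eq_div_iff hne]
    calc (c a b : ℚ) * (2 ^ (2-(a:ℕ)) * (k:ℚ) ^ (β-b)) * (2 ^ (a:ℕ) * (k:ℚ) ^ b)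
        = (c a b : ℚ) * ((2^(2-(a:ℕ)) * 2^(a:ℕ)) * ((k:ℚ)^(β-b) * (k:ℚ)^b)) := by ring
      _ = (c a b : ℚ) * (4 * (k:ℚ)^β) := by rw [h2, hk]
  -- Step 3: the natural-number equation
  have key : (∑ a : Fin 3, ∑ b ∈ Finset.range (β+1),
      c a b * (2 ^ (2-(a:ℕ)) * k ^ (β-b))) = 4 * k ^ β := by
    have hq : ((∑ a : Fin 3, ∑ b ∈ Finset.range (β+1),
        c a b * (2 ^ (2-(a:ℕ)) * k ^ (β-b)) : ℕ) : ℚ) = ((4 * k ^ β : ℕ) : ℚ) := by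
      push_cast
      calc ∑ a : Fin 3, ∑ b ∈ Finset.range (β+1),
            (c a b : ℚ) * (2 ^ (2-(a:ℕ)) * (k:ℚ) ^ (β-b))
          = ∑ a : Fin 3, ∑ b ∈ Finset.range (β+1),
            ((c a b : ℚ) / (2 ^ (a:ℕ) * (k:ℚ) ^ b)) * (4 * (k:ℚ)^β) := by
            exact Finset.sum_congr rfl fun a _ => Finset.sum_congr rfl (hterm a)
        _ = (∑ a : Fin 3, ∑ b ∈ Finset.range (β+1),
            (c a b : ℚ) / (2 ^ (a:ℕ) * (k:ℚ) ^ b)) * (4 * (k:ℚ)^β) := by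
            rw [Finset.sum_mul]
            exact Finset.sum_congr rfl fun a _ => (Finset.sum_mul _ _ _).symm
        _ = 4 * (k:ℚ)^β := by rw [hsum', one_mul]
    exact_mod_cast hq
  -- Step 4: split off the top row
  set R : ℕ := ∑ a : Fin 3, ∑ b ∈ Finset.range β, c a b * (2 ^ (2-(a:ℕ)) * k ^ (β-b)) with hR
  set N : ℕ := 4 * c 0 β + 2 * c 1 β + c 2 β with hN
  have hsplit : R + N = 4 * k ^ β := by
    rw [← key]
    have : ∀ a : Fin 3, ∑ b ∈ Finset.range (β+1), c a b * (2 ^ (2-(a:ℕ)) * k ^ (β-b))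
        = (∑ b ∈ Finset.range β, c a b * (2 ^ (2-(a:ℕ)) * k ^ (β-b)))
          + c a β * 2 ^ (2-(a:ℕ)) := by
      intro a
      rw [Finset.sum_range_succ, Nat.sub_self, pow_zero, mul_one]
    rw [Finset.sum_congr rfl fun a _ => this a, Finset.sum_add_distrib]
    congr 1
    simp [Fin.sum_univ_three, hN]
    ring
  have hRdvd : k ∣ R := by
    refine Finset.dvd_sum fun a _ => Finset.dvd_sum fun b hb => ?_
    have hbβ : β - b ≠ 0 := by
      have := Finset.mem_range.mp hb; omega
    exact dvd_mul_of_dvd_right (dvd_mul_of_dvd_right (dvd_pow_self k hbβ) _) _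
  have hNdvd : k ∣ N := by
    have h1 : k ∣ 4 * k ^ β := dvd_mul_of_dvd_right (dvd_pow_self k (by omega)) 4
    rw [← hsplit] at h1
    exact (Nat.dvd_add_right hRdvd).mp h1
  have hNpos : 0 < N := by
    obtain ⟨a, ha⟩ := hβtop
    fin_cases a <;> simp_all <;> omega
  obtain ⟨m, hm⟩ := hNdvd
  have hmpos : 1 ≤ m := by
    rcases Nat.eq_zero_or_pos m with h | h
    · rw [h, mul_zero] at hm; omega
    · exact h
  have hcop : Nat.Coprime k 4 := by
    have : Nat.gcd 4 k = 1 := by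
      rw [Nat.gcd_rec, hkmod]; rfl
    exact (Nat.coprime_comm).mp this
  refine ⟨?_, ?_, ?_, ?_⟩ <;> intro h <;>
    obtain ⟨h1, h2⟩ := Prod.mk.injEq .. ▸ h
  · -- (0,0): N = 4 c0, k ∣ c0, c0 > 0
    have hN4 : N = c 0 β * 4 := by omega
    have hd : k ∣ c 0 β := hcop.dvd_of_dvd_mul_right (hN4 ▸ hm ▸ ⟨m, hm ▸ rfl⟩)
    have : 0 < c 0 β := by omega
    exact Nat.le_of_dvd this hd
  · -- (0,1): 4c0+1 = k*m ≥ k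
    have hge : k ≤ N := Nat.le_of_dvd hNpos ⟨m, hm⟩
    omega
  · -- (1,0): N = 4c0+2 even, k odd, so m even, m ≥ 2
    rcases Nat.lt_or_ge m 2 with hm2 | hm2
    · interval_cases m <;> omega
    · have : k * 2 ≤ k * m := Nat.mul_le_mul_left k hm2
      omega
  · -- (1,1): N = 4c0+3 ≡ 3 mod 4; m=1 gives k≡3, m=2 gives parity contra, so m ≥ 3
    rcases Nat.lt_or_ge m 3 with hm3 | hm3
    · interval_cases m <;> omega
    · have : k * 3 ≤ k * m := Nat.mul_le_mul_left k hm3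
      omega
end

section
/- Let k be a positive integer with k ≡ 3 (mod 4), and let c : Fin 3 → ℕ → ℕ be a counting array of a solution, i.e., c is finitely supported and ∑_{a<3, b} (c a b : ℚ)/(2^a * k^b) = 1. Let β be the largest b such that c a b ≠ 0 for some a, and suppose β ≥ 1, c 1 β ≤ 1, and c 2 β ≤ 1. Then: if (c 1 β, c 2 β) = (0,0) then c 0 β ≥ k; if (c 1 β, c 2 β) = (0,1) then c 0 β ≥ (3k-1)/4; if (c 1 β, c 2 β) = (1,0) then c 0 β ≥ (k-1)/2; and if (c 1 β, c 2 β) = (1,1) then c 0 β ≥ (k-3)/4. -/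
/-- For `k ≡ 3 (mod 4)`: in the top nonzero row `β ≥ 1` of the counting array of a
solution with `c 1 β ≤ 1` and `c 2 β ≤ 1`, the entry `c 0 β` is at least
`k`, `(3k-1)/4`, `(k-1)/2`, `(k-3)/4` according as `(c 1 β, c 2 β)` is
`(0,0)`, `(0,1)`, `(1,0)`, `(1,1)`. -/
theorem top_row_min_mod_three (k : ℕ) (hkmod : k % 4 = 3)
    (c : Fin 3 → ℕ → ℕ)
    (hfin : {p : Fin 3 × ℕ | c p.1 p.2 ≠ 0}.Finite)
    (hsum : ∑ᶠ (a : Fin 3) (b : ℕ), (c a b : ℚ) / (2 ^ (a : ℕ) * (k : ℚ) ^ b) = 1)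
    (β : ℕ) (hβtop : ∃ a, c a β ≠ 0) (hβmax : ∀ b, (∃ a, c a b ≠ 0) → b ≤ β)
    (hβ1 : 1 ≤ β) (hc1 : c 1 β ≤ 1) (hc2 : c 2 β ≤ 1) :
    ((c 1 β, c 2 β) = (0, 0) → k ≤ c 0 β) ∧
      ((c 1 β, c 2 β) = (0, 1) → (3 * k - 1) / 4 ≤ c 0 β) ∧
      ((c 1 β, c 2 β) = (1, 0) → (k - 1) / 2 ≤ c 0 β) ∧
      ((c 1 β, c 2 β) = (1, 1) → (k - 3) / 4 ≤ c 0 β) := by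
  have hk3 : 3 ≤ k := by omega
  have hkQ : (k : ℚ) ≠ 0 := by positivity
  -- rewrite the finsum as a finite sum
  have hrow : ∀ a : Fin 3, ∑ᶠ b : ℕ, (c a b : ℚ) / (2 ^ (a : ℕ) * (k : ℚ) ^ b)
      = ∑ b ∈ Finset.range (β + 1), (c a b : ℚ) / (2 ^ (a : ℕ) * (k : ℚ) ^ b) := by
    intro a
    apply finsum_eq_finset_sum_of_support_subset
    intro b hb
    simp only [Function.mem_support] at hb
    have hcb : c a b ≠ 0 := by
      intro h0
      apply hb
      simp [h0]
    have := hβmax b ⟨a, hcb⟩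
    simp only [Finset.coe_range, Set.mem_Iio]
    omega
  rw [finsum_eq_sum_of_fintype] at hsum
  simp only [hrow] at hsum
  -- the natural number identity
  set N : ℕ := ∑ a : Fin 3, ∑ b ∈ Finset.range (β + 1),
      c a b * (2 ^ (2 - (a : ℕ)) * k ^ (β - b)) with hNdef
  have hN : (N : ℚ) = 4 * (k : ℚ) ^ β := by
    have : (N : ℚ) = ∑ a : Fin 3, ∑ b ∈ Finset.range (β + 1),
        (4 * (k : ℚ) ^ β) * ((c a b : ℚ) / (2 ^ (a : ℕ) * (k : ℚ) ^ b)) := by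
      rw [hNdef]
      push_cast
      refine Finset.sum_congr rfl fun a _ => Finset.sum_congr rfl fun b hb => ?_
      have ha : (a : ℕ) ≤ 2 := by omega
      have hbβ : b ≤ β := by
        simp only [Finset.mem_range] at hb; omega
      have h2 : (2 : ℚ) ^ (2 - (a : ℕ)) * 2 ^ (a : ℕ) = 4 := by
        rw [← pow_add, Nat.sub_add_cancel ha]; norm_num
      have hk : (k : ℚ) ^ (β - b) * (k : ℚ) ^ b = (k : ℚ) ^ β := by
        rw [← pow_add, Nat.sub_add_cancel hbβ]
      field_simp
      linear_combination ((c a b : ℚ) * ((k:ℚ) ^ (β - b) * (k:ℚ) ^ b)) * h2 + 4 * (c a b : ℚ) * hk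
    rw [this]
    simp only [← Finset.mul_sum]
    rw [hsum, mul_one]
  have hNnat : N = 4 * k ^ β := by
    have : ((4 * k ^ β : ℕ) : ℚ) = 4 * (k : ℚ) ^ β := by push_cast; ring
    exact_mod_cast hN.trans this.symm
  -- split off the top row
  have hsplit : N = (∑ a : Fin 3, ∑ b ∈ Finset.range β, c a b * (2 ^ (2 - (a : ℕ)) * k ^ (β - b)))
      + (4 * c 0 β + 2 * c 1 β + c 2 β) := by
    rw [hNdef]
    simp only [Finset.sum_range_succ, Nat.sub_self, pow_zero, mul_one]
    rw [Finset.sum_add_distrib]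
    congr 1
    rw [Fin.sum_univ_three]
    norm_num
    try omega
  have hdvd_rest : k ∣ ∑ a : Fin 3, ∑ b ∈ Finset.range β, c a b * (2 ^ (2 - (a : ℕ)) * k ^ (β - b)) := by
    refine Finset.dvd_sum fun a _ => Finset.dvd_sum fun b hb => ?_
    have hbβ : b < β := Finset.mem_range.mp hb
    exact Dvd.dvd.mul_left (Dvd.dvd.mul_left (dvd_pow_self k (by omega)) _) _
  have hdvd_N : k ∣ N := by
    rw [hNnat]
    exact Dvd.dvd.mul_left (dvd_pow_self k (by omega)) _
  have hdvd_top : k ∣ 4 * c 0 β + 2 * c 1 β + c 2 β := by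
    rw [hsplit] at hdvd_N
    exact (Nat.dvd_add_right hdvd_rest).mp hdvd_N
  obtain ⟨m, hm⟩ := hdvd_top
  have hpos : 4 * c 0 β + 2 * c 1 β + c 2 β ≠ 0 := by
    obtain ⟨a, ha⟩ := hβtop
    have h3 : c 0 β ≠ 0 ∨ c 1 β ≠ 0 ∨ c 2 β ≠ 0 := by
      fin_cases a
      · exact Or.inl ha
      · exact Or.inr (Or.inl ha)
      · exact Or.inr (Or.inr ha)
    rcases h3 with h | h | h <;> omega
  have hk2 : k % 2 = 1 := by omega
  refine ⟨fun h => ?_, fun h => ?_, fun h => ?_, fun h => ?_⟩ <;>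
    simp only [Prod.mk.injEq] at h
  · -- (0,0): k ∣ 4 c0, k odd → k ∣ c0
    rw [h.1, h.2] at hm
    have hkm : Nat.Coprime k 4 := by
      have : Nat.Coprime k 2 := by
        rw [Nat.coprime_comm, Nat.Prime.coprime_iff_not_dvd Nat.prime_two]
        omega
      simpa using this.pow_right 2
    have : k ∣ c 0 β := hkm.dvd_of_dvd_mul_left ⟨m, by omega⟩
    exact Nat.le_of_dvd (by omega) this
  · -- (0,1): 4 c0 + 1 = k m, m ≡ 3 mod 4
    rw [h.1, h.2] at hm
    have hmod : k * m % 4 = 1 := by omega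
    rw [Nat.mul_mod, hkmod] at hmod
    have hm4 : m % 4 = 3 := by omega
    have h3 : 3 ≤ m := by omega
    have hineq : k * 3 ≤ k * m := Nat.mul_le_mul (le_refl k) h3
    omega
  · -- (1,0): 4 c0 + 2 = k m, m even
    rw [h.1, h.2] at hm
    have hmod : k * m % 2 = 0 := by omega
    rw [Nat.mul_mod, hk2] at hmod
    have hm2 : m % 2 = 0 := by omega
    have hm0 : m ≠ 0 := by rintro rfl; omega
    have h3 : 2 ≤ m := by omega
    have hineq : k * 2 ≤ k * m := Nat.mul_le_mul (le_refl k) h3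
    omega
  · -- (1,1): 4 c0 + 3 = k m, m ≥ 1
    rw [h.1, h.2] at hm
    have hm0 : m ≠ 0 := by rintro rfl; omega
    have h3 : 1 ≤ m := by omega
    have hineq : k * 1 ≤ k * m := Nat.mul_le_mul (le_refl k) h3
    omega
end
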